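/- arXiv:2106.00701 — 6 statements merged into one kernel-verified Lean document; each statement's English description precedes it below -/
import Mathlib

section
/- Let Γ be a digraph of order n ≥ 2 with Laplacian L, and let Q be a restrictor matrix of order n. If Γ is polygonal, i.e. W_r(L) equals the convex hull (over ℝ, viewing ℂ as a real vector space) of the spectrum of QᴴLQ, then the algebraic connectivity α(Γ) equals the minimum of the real parts of the eigenvalues of QᴴLQ. -/
open Matrix

/-- A 0/1 adjacency matrix with zero diagonal. -/
def IsAdj {m : Type*} [Fintype m] (A : Matrix m m ℝ) : Prop :=
  (∀ i j, A i j = 0 ∨ A i j = 1) ∧ ∀ i, A i i = 0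

/-- Laplacian of a digraph: `L i i = d⁺(i)` and `L i j = -A i j` for `i ≠ j`. -/
noncomputable def lap {m : Type*} [Fintype m] [DecidableEq m] (A : Matrix m m ℝ) :
    Matrix m m ℝ :=
  Matrix.diagonal (fun i => ∑ j, A i j) - A

/-- Complexified Laplacian. -/
noncomputable def lapC {m : Type*} [Fintype m] [DecidableEq m] (A : Matrix m m ℝ) :
    Matrix m m ℂ :=
  (lap A).map (fun x => (x : ℂ))

/-- Restricted numerical range `W_r(M) = { xᴴ M x : ‖x‖ = 1, xᴴ e = 0 }`. -/
noncomputable def rnr {m : Type*} [Fintype m] (M : Matrix m m ℂ) : Set ℂ :=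
  { z | ∃ x : EuclideanSpace ℂ m, ‖x‖ = 1 ∧ star (x : m → ℂ) ⬝ᵥ (fun _ => (1 : ℂ)) = 0 ∧
      z = star (x : m → ℂ) ⬝ᵥ M.mulVec (x : m → ℂ) }

/-- Restrictor matrix: orthonormal columns, all orthogonal to the all-ones vector. -/
def IsRestrictor {m k : Type*} [Fintype m] [Fintype k] [DecidableEq k]
    (Q : Matrix m k ℂ) : Prop :=
  Qᴴ * Q = 1 ∧ Qᴴ *ᵥ (fun _ => (1 : ℂ)) = 0

/-- Normal matrix: `Mᴴ M = M Mᴴ` (for real matrices, `Mᵀ M = M Mᵀ`). -/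
def IsNormalM {m R : Type*} [Fintype m] [Mul (Matrix m m R)] [Star (Matrix m m R)]
    (M : Matrix m m R) : Prop := star M * M = M * star M

/-- Balanced digraph: `d⁺(i) = d⁻(i)` for every vertex. -/
def Bal {m : Type*} [Fintype m] (A : Matrix m m ℝ) : Prop :=
  ∀ i, ∑ j, A i j = ∑ j, A j i

/-- Algebraic connectivity `α(Γ) = min { xᵀ L x : x ∈ ℝⁿ, ‖x‖ = 1, xᵀ e = 0 }`. -/
noncomputable def algConn {m : Type*} [Fintype m] (L : Matrix m m ℝ) : ℝ :=
  sInf { r | ∃ x : EuclideanSpace ℝ m, ‖x‖ = 1 ∧ (x : m → ℝ) ⬝ᵥ (fun _ => (1 : ℝ)) = 0 ∧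
      r = (x : m → ℝ) ⬝ᵥ L.mulVec (x : m → ℝ) }

/-!
A real unit vector `x ⊥ e` gives the real value `xᴴ L x = xᵀ L x` in `W_r(L)`. Conversely, writing
a complex unit vector `x ⊥ e` as `u + i v` with real `u, v ⊥ e` gives
`Re (xᴴ L x) = uᵀ L u + vᵀ L v ≥ α(Γ) (‖u‖² + ‖v‖²) = α(Γ)`. So `α(Γ)` is the infimum of `Re` on
`W_r(L)`. When `W_r(L)` is the convex hull of the spectrum `σ` of `QᴴLQ`, `Re` maps it onto the
convex hull of `Re σ`, whose infimum is `min Re σ`.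
-/

section RestrictedRange

variable {m : Type*} [Fintype m]

noncomputable def realRnr (L : Matrix m m ℝ) : Set ℝ :=
  { r | ∃ x : EuclideanSpace ℝ m, ‖x‖ = 1 ∧ (x : m → ℝ) ⬝ᵥ (fun _ => (1 : ℝ)) = 0 ∧
      r = (x : m → ℝ) ⬝ᵥ L.mulVec (x : m → ℝ) }

lemma algConn_eq_sInf_realRnr (L : Matrix m m ℝ) : algConn L = sInf (realRnr L) :=
  rfl

lemma bddBelow_realRnr (L : Matrix m m ℝ) : BddBelow (realRnr L) := by
  have hq : Continuous fun x : EuclideanSpace ℝ m => (x : m → ℝ) ⬝ᵥ L *ᵥ (x : m → ℝ) := by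
    fun_prop
  refine ((isCompact_sphere (0 : EuclideanSpace ℝ m) 1).bddBelow_image hq.continuousOn).mono ?_
  rintro _ ⟨x, hx, -, rfl⟩
  exact ⟨x, by simpa using hx, rfl⟩

lemma inv_dotProduct_self_mul_mem_realRnr (L : Matrix m m ℝ) {u : m → ℝ} (hu : u ≠ 0)
    (hue : u ⬝ᵥ (fun _ => (1 : ℝ)) = 0) : (u ⬝ᵥ u)⁻¹ * (u ⬝ᵥ L *ᵥ u) ∈ realRnr L := by
  have hpos : 0 < u ⬝ᵥ u := by simpa using dotProduct_self_star_pos_iff.mpr hu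
  set c := (Real.sqrt (u ⬝ᵥ u))⁻¹
  have hc : c ^ 2 = (u ⬝ᵥ u)⁻¹ := by
    rw [inv_pow, Real.sq_sqrt hpos.le]
  refine ⟨WithLp.toLp 2 (c • u), ?_, ?_, ?_⟩
  · rw [← pow_eq_one_iff_of_nonneg (norm_nonneg _) two_ne_zero, EuclideanSpace.real_norm_sq_eq]
    simp only [Pi.smul_apply, smul_eq_mul, mul_pow, ← Finset.mul_sum]
    rw [hc, inv_mul_eq_one₀ hpos.ne']
    simp [dotProduct, sq]
  · simp [hue]
  · simp only [mulVec_smul, smul_dotProduct, dotProduct_smul, smul_eq_mul]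
    rw [← mul_assoc, ← sq, hc]

lemma algConn_mul_dotProduct_self_le (L : Matrix m m ℝ) {u : m → ℝ}
    (hue : u ⬝ᵥ (fun _ => (1 : ℝ)) = 0) : algConn L * (u ⬝ᵥ u) ≤ u ⬝ᵥ L *ᵥ u := by
  rcases eq_or_ne u 0 with rfl | hu
  · simp
  have hpos : 0 < u ⬝ᵥ u := by simpa using dotProduct_self_star_pos_iff.mpr hu
  rw [mul_comm, ← le_inv_mul_iff₀ hpos]
  exact csInf_le (bddBelow_realRnr L) (inv_dotProduct_self_mul_mem_realRnr L hu hue)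

lemma realRnr_nonempty [Nontrivial m] [DecidableEq m] (L : Matrix m m ℝ) :
    (realRnr L).Nonempty := by
  obtain ⟨i, j, hij⟩ := exists_pair_ne m
  have hu : (Pi.single i 1 - Pi.single j 1 : m → ℝ) ≠ 0 := fun h => by
    simpa [hij] using congrFun h i
  have hue : (Pi.single i 1 - Pi.single j 1 : m → ℝ) ⬝ᵥ (fun _ => (1 : ℝ)) = 0 := by
    simp [sub_dotProduct]
  exact ⟨_, inv_dotProduct_self_mul_mem_realRnr L hu hue⟩

lemma re_star_dotProduct_map_ofReal_mulVec (M : Matrix m m ℝ) (x : m → ℂ) :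
    (star x ⬝ᵥ (M.map (fun r => (r : ℂ))) *ᵥ x).re =
      (fun i => (x i).re) ⬝ᵥ M *ᵥ (fun i => (x i).re) +
        (fun i => (x i).im) ⬝ᵥ M *ᵥ (fun i => (x i).im) := by
  simp only [dotProduct, mulVec, Matrix.map_apply, Pi.star_apply, Finset.mul_sum,
    Complex.re_sum, ← Finset.sum_add_distrib]
  refine Finset.sum_congr rfl fun i _ => Finset.sum_congr rfl fun j _ => ?_
  simp only [Complex.mul_re, Complex.mul_im, RCLike.star_def, Complex.conj_re, Complex.conj_im,
    Complex.ofReal_re, Complex.ofReal_im]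
  ring

lemma algConn_le_re_of_mem_rnr (M : Matrix m m ℝ) {z : ℂ}
    (hz : z ∈ rnr (M.map (fun r => (r : ℂ)))) : algConn M ≤ z.re := by
  obtain ⟨x, hx, hxe, rfl⟩ := hz
  set u : m → ℝ := fun i => (x i).re
  set v : m → ℝ := fun i => (x i).im
  have hsum : ∑ i, star (x i) = 0 := by simpa [dotProduct] using hxe
  have hue : u ⬝ᵥ (fun _ => (1 : ℝ)) = 0 := by
    simpa [dotProduct, Complex.re_sum] using congrArg Complex.re hsum
  have hve : v ⬝ᵥ (fun _ => (1 : ℝ)) = 0 := by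
    simpa [dotProduct, Complex.im_sum] using congrArg Complex.im hsum
  have hnorm : u ⬝ᵥ u + v ⬝ᵥ v = 1 := by
    rw [← pow_eq_one_iff_of_nonneg (norm_nonneg x) two_ne_zero, EuclideanSpace.norm_sq_eq] at hx
    simp only [Complex.sq_norm, Complex.normSq_apply] at hx
    simp only [u, v, dotProduct, ← Finset.sum_add_distrib, hx]
  calc algConn M = algConn M * (u ⬝ᵥ u) + algConn M * (v ⬝ᵥ v) := by
        rw [← mul_add, hnorm, mul_one]
    _ ≤ u ⬝ᵥ M *ᵥ u + v ⬝ᵥ M *ᵥ v :=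
      add_le_add (algConn_mul_dotProduct_self_le M hue) (algConn_mul_dotProduct_self_le M hve)
    _ = _ := (re_star_dotProduct_map_ofReal_mulVec M x).symm

lemma ofReal_mem_rnr_map_of_mem_realRnr (M : Matrix m m ℝ) {r : ℝ} (hr : r ∈ realRnr M) :
    (r : ℂ) ∈ rnr (M.map (fun r => (r : ℂ))) := by
  obtain ⟨x, hx, hxe, rfl⟩ := hr
  refine ⟨WithLp.toLp 2 (fun i => (x i : ℂ)), ?_, ?_, ?_⟩
  · simpa [EuclideanSpace.norm_eq] using hx
  · simpa [dotProduct] using congrArg ((↑) : ℝ → ℂ) hxe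
  · simp [dotProduct, mulVec]

end RestrictedRange

lemma csInf_re_le_re_of_mem_convexHull {s : Set ℂ} (hs : BddBelow (Complex.re '' s)) {z : ℂ}
    (hz : z ∈ convexHull ℝ s) : sInf (Complex.re '' s) ≤ z.re := by
  have hre : z.re ∈ convexHull ℝ (Complex.re '' s) :=
    Complex.reLm.image_convexHull s ▸ Set.mem_image_of_mem Complex.reLm hz
  exact convexHull_min (fun _ hr => csInf_le hs hr) (convex_Ici _) hre

lemma csInf_eq_csInf_re_of_convexHull {S : Set ℝ} {s : Set ℂ} (hS : S.Nonempty)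
    (hs : s.Nonempty) (hSs : ∀ r ∈ S, (r : ℂ) ∈ convexHull ℝ s)
    (hle : ∀ z ∈ convexHull ℝ s, sInf S ≤ z.re) : sInf S = sInf (Complex.re '' s) := by
  have hs_le : ∀ r ∈ Complex.re '' s, sInf S ≤ r := by
    rintro _ ⟨z, hz, rfl⟩
    exact hle z (subset_convexHull ℝ s hz)
  refine le_antisymm (le_csInf (hs.image _) hs_le) (le_csInf hS fun r hr => ?_)
  simpa using csInf_re_le_re_of_mem_convexHull ⟨_, hs_le⟩ (hSs r hr)

theorem algConn_eq_min_re_of_polygonal_general {n : ℕ} (hn : 2 ≤ n)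
    (A : Matrix (Fin n) (Fin n) ℝ)
    (Q : Matrix (Fin n) (Fin (n - 1)) ℂ)
    (hpoly : rnr (lapC A) = convexHull ℝ (spectrum ℂ (Qᴴ * lapC A * Q))) :
    algConn (lap A) = sInf { r | ∃ μ ∈ spectrum ℂ (Qᴴ * lapC A * Q), r = μ.re } := by
  have : Nontrivial (Fin n) := Fin.nontrivial_iff_two_le.mpr hn
  have : Nonempty (Fin (n - 1)) := ⟨⟨0, by omega⟩⟩
  have hre : { r | ∃ μ ∈ spectrum ℂ (Qᴴ * lapC A * Q), r = μ.re } =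
      Complex.re '' spectrum ℂ (Qᴴ * lapC A * Q) := by
    ext; simp [eq_comm]
  rw [hre, algConn_eq_sInf_realRnr]
  refine csInf_eq_csInf_re_of_convexHull (realRnr_nonempty _)
    (spectrum.nonempty_of_isAlgClosed_of_finiteDimensional ℂ _) (fun r hr => ?_) (fun z hz => ?_)
  · exact hpoly ▸ ofReal_mem_rnr_map_of_mem_realRnr (lap A) hr
  · exact algConn_le_re_of_mem_rnr (lap A) (hpoly ▸ hz)

/-- If `Γ` is polygonal, then the algebraic connectivity `α(Γ)` equals the
minimum of the real parts of the eigenvalues of `QᴴLQ`. -/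
theorem algConn_eq_min_re_of_polygonal {n : ℕ} (hn : 2 ≤ n)
    (A : Matrix (Fin n) (Fin n) ℝ) (hA : IsAdj A)
    (Q : Matrix (Fin n) (Fin (n - 1)) ℂ) (hQ : IsRestrictor Q)
    (hpoly : rnr (lapC A) = convexHull ℝ (spectrum ℂ (Qᴴ * lapC A * Q))) :
    algConn (lap A) = sInf { r | ∃ μ ∈ spectrum ℂ (Qᴴ * lapC A * Q), r = μ.re } :=
  algConn_eq_min_re_of_polygonal_general hn A Q hpoly
end

section
/- Let Γ be a digraph of order n with Laplacian L, let L̄ = (n·I − e·eᵀ) − L be the Laplacian of the complement digraph Γ̄, and let Q be a restrictor matrix of order n. Then: (a) L is a normal matrix if and only if L̄ is a normal matrix; (b) QᴴLQ is a normal matrix if and only if QᴴL̄Q is a normal matrix; (c) W_r(L) equals the convex hull (over ℝ) of the spectrum of QᴴLQ if and only if W_r(L̄) equals the convex hull of the spectrum of QᴴL̄Q. Consequently, Γ is normal (resp. restricted-normal, resp. pseudo-normal) if and only if Γ̄ is normal (resp. restricted-normal, resp. pseudo-normal). -/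
open Matrix

/-!
With `J = e eᵀ` we have `L̄ = n•I - J - L`, and `L J = 0` because the rows of a Laplacian sum to
zero, while `Qᴴ J = 0` and `Qᴴ Q = I` for a restrictor `Q`. Hence `QᴴL̄Q = n•I - QᴴLQ`, and
`W_r(L̄) = n - W_r(L)` since `xᴴJx = 0` on `e⊥`: parts (b) and (c) are invariance under the
affine map `z ↦ n - z`. For (a), `L̄ᴴL̄ - L̄L̄ᴴ = (LᴴL - LLᴴ) + JL + (JL)ᴴ`, and `JL = 0` exactly
when the digraph is balanced. The `i`-th diagonal entries of the two commutators are
`d⁻(i) - d⁺(i)` and `d⁺(i) - d⁻(i)` (this uses that `A` is a 0/1 matrix with zero diagonal), so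
normality of either Laplacian forces balance, and then the two commutators coincide.
-/

section NormalShift

variable {m : Type*} [Fintype m] [DecidableEq m]

theorem isNormalM_smul_one_sub_iff (N : Matrix m m ℂ) (c : ℂ) :
    IsNormalM (c • (1 : Matrix m m ℂ) - N) ↔ IsNormalM N := by
  have hcomm : star (c • 1 - N) * (c • 1 - N) - (c • 1 - N) * star (c • 1 - N)
      = star N * N - N * star N := by
    simp only [star_sub, star_smul, star_one, mul_sub, sub_mul, smul_mul_assoc, mul_smul_comm,
      one_mul, mul_one, smul_sub, smul_smul, mul_comm (star c) c]
    abel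
  rw [IsNormalM, IsNormalM, ← sub_eq_zero, hcomm, sub_eq_zero]

theorem commutator_smul_one_sub_sub (M J : Matrix m m ℂ) (c : ℂ)
    (hJ : star J = J) (hMJ : M * J = 0) :
    star (c • 1 - J - M) * (c • 1 - J - M) - (c • 1 - J - M) * star (c • 1 - J - M)
      = (star M * M - M * star M) + J * M + star M * J := by
  have hJM : J * star M = 0 := by rw [← hJ, ← star_mul, hMJ, star_zero]
  simp only [star_sub, star_smul, star_one, hJ, mul_sub, sub_mul, smul_mul_assoc, mul_smul_comm,
    one_mul, mul_one, hMJ, hJM, smul_sub, smul_smul, mul_comm (star c) c]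
  abel

theorem spectrum_smul_one_sub (N : Matrix m m ℂ) (c : ℂ) :
    spectrum ℂ (c • 1 - N) = (c - ·) '' spectrum ℂ N := by
  rw [← Algebra.algebraMap_eq_smul_one, ← spectrum.singleton_sub_eq, Set.singleton_sub]

end NormalShift

theorem image_const_sub_convexHull {E : Type*} [AddCommGroup E] [Module ℝ E] (c : E)
    (s : Set E) : (c - ·) '' convexHull ℝ s = convexHull ℝ ((c - ·) '' s) :=
  (AffineMap.const ℝ E c - AffineMap.id ℝ E).image_convexHull s

section Ones

variable {m : Type*}

theorem star_ones : star (of (fun _ _ => 1) : Matrix m m ℂ) = of (fun _ _ => 1) := by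
  ext i j
  simp [star_apply]

theorem ones_mulVec [Fintype m] (v : m → ℂ) :
    (of (fun _ _ => 1) : Matrix m m ℂ) *ᵥ v = (∑ j, v j) • fun _ => 1 := by
  ext i
  simp [mulVec, dotProduct]

end Ones

section Laplacian

variable {m : Type*} [Fintype m] [DecidableEq m]

theorem sum_lap_row (A : Matrix m m ℝ) (i : m) : ∑ k, lap A i k = 0 := by
  simp [lap, Finset.sum_sub_distrib, diagonal_apply]

theorem sum_lap_col (A : Matrix m m ℝ) (j : m) :
    ∑ k, lap A k j = ∑ k, A j k - ∑ k, A k j := by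
  simp [lap, Finset.sum_sub_distrib, diagonal_apply]

theorem sum_sq_ite_sub {f : m → ℝ} (hf : ∀ k, f k = 0 ∨ f k = 1) {i : m} (hfi : f i = 0)
    (d : ℝ) : ∑ k, ((if k = i then d else 0) - f k) ^ 2 = d ^ 2 + ∑ k, f k := by
  have hterm : ∀ k,
      ((if k = i then d else 0) - f k) ^ 2 = (if k = i then d ^ 2 else 0) + f k := by
    intro k
    split_ifs with hk
    · rw [hk, hfi]; ring
    · rcases hf k with h | h <;> rw [h] <;> ring
  simp only [hterm, Finset.sum_add_distrib, Finset.sum_ite_eq', Finset.mem_univ, if_true]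

theorem sum_sq_lap_col {A : Matrix m m ℝ} (hA : IsAdj A) (j : m) :
    ∑ k, lap A k j ^ 2 = (∑ l, A j l) ^ 2 + ∑ k, A k j := by
  have hcol : ∀ k, lap A k j = (if k = j then ∑ l, A j l else 0) - A k j := by
    intro k
    rcases eq_or_ne k j with rfl | hk <;> simp [lap, *]
  simp only [hcol]
  exact sum_sq_ite_sub (fun k => hA.1 k j) (hA.2 j) _

theorem sum_sq_lap_row {A : Matrix m m ℝ} (hA : IsAdj A) (i : m) :
    ∑ k, lap A i k ^ 2 = (∑ l, A i l) ^ 2 + ∑ k, A i k := by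
  have hrow : ∀ k, lap A i k = (if k = i then ∑ l, A i l else 0) - A i k := by
    intro k
    rcases eq_or_ne k i with rfl | hk <;> simp [lap, hA.2, *, Ne.symm]
  simp only [hrow]
  exact sum_sq_ite_sub (fun k => hA.1 i k) (hA.2 i) _

theorem lapC_commutator_apply_self {A : Matrix m m ℝ} (hA : IsAdj A) (i : m) :
    (star (lapC A) * lapC A - lapC A * star (lapC A)) i i
      = ((∑ k, A k i - ∑ k, A i k : ℝ) : ℂ) := by
  have hcol : (star (lapC A) * lapC A) i i = ((∑ k, lap A k i ^ 2 : ℝ) : ℂ) := by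
    simp [mul_apply, lapC, sq]
  have hrow : (lapC A * star (lapC A)) i i = ((∑ k, lap A i k ^ 2 : ℝ) : ℂ) := by
    simp [mul_apply, lapC, sq]
  rw [Matrix.sub_apply, hcol, hrow, sum_sq_lap_col hA, sum_sq_lap_row hA]
  push_cast
  ring

theorem lapC_mul_ones (A : Matrix m m ℝ) : lapC A * (of (fun _ _ => 1) : Matrix m m ℂ) = 0 := by
  ext i j
  simp only [mul_apply, of_apply, mul_one, lapC, map_apply, Matrix.zero_apply]
  rw [← Complex.ofReal_sum, sum_lap_row, Complex.ofReal_zero]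

theorem ones_mul_lapC_apply (A : Matrix m m ℝ) (i j : m) :
    ((of (fun _ _ => 1) : Matrix m m ℂ) * lapC A) i j = ((∑ k, A j k - ∑ k, A k j : ℝ) : ℂ) := by
  simp only [mul_apply, of_apply, one_mul, lapC, map_apply]
  rw [← Complex.ofReal_sum, sum_lap_col]

theorem ones_mul_lapC_of_bal {A : Matrix m m ℝ} (hA : Bal A) :
    (of (fun _ _ => 1) : Matrix m m ℂ) * lapC A = 0 := by
  unfold Bal at hA
  ext i j
  rw [ones_mul_lapC_apply, hA j, sub_self, Complex.ofReal_zero, Matrix.zero_apply]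

end Laplacian

section ComplementLaplacian

variable {m : Type*} [Fintype m] [DecidableEq m]

theorem star_lapC_mul_ones (A : Matrix m m ℝ) :
    star (lapC A) * (of (fun _ _ => 1) : Matrix m m ℂ)
      = star ((of (fun _ _ => 1) : Matrix m m ℂ) * lapC A) := by
  rw [star_mul, star_ones]

theorem commutator_complement_lapC (A : Matrix m m ℝ) (c : ℂ) :
    let Lbar := c • 1 - of (fun _ _ => 1) - lapC A
    star Lbar * Lbar - Lbar * star Lbar
      = (star (lapC A) * lapC A - lapC A * star (lapC A))
        + of (fun _ _ => 1) * lapC A + star (of (fun _ _ => 1) * lapC A) := by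
  rw [← star_lapC_mul_ones]
  exact commutator_smul_one_sub_sub _ _ c star_ones (lapC_mul_ones A)

theorem bal_of_isNormalM_lapC {A : Matrix m m ℝ} (hA : IsAdj A) (h : IsNormalM (lapC A)) :
    Bal A := by
  unfold Bal
  intro i
  have hii : (star (lapC A) * lapC A - lapC A * star (lapC A)) i i = 0 := by
    rw [sub_eq_zero.2 h, Matrix.zero_apply]
  rw [lapC_commutator_apply_self hA, Complex.ofReal_eq_zero] at hii
  linarith

theorem bal_of_isNormalM_complement {A : Matrix m m ℝ} (hA : IsAdj A) (c : ℂ)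
    (h : IsNormalM (c • 1 - of (fun _ _ => 1) - lapC A)) : Bal A := by
  unfold Bal
  intro i
  have hzero : (star (lapC A) * lapC A - lapC A * star (lapC A)) + of (fun _ _ => 1) * lapC A
      + star (of (fun _ _ => 1) * lapC A) = 0 := by
    rw [← commutator_complement_lapC A c, sub_eq_zero]
    exact h
  have hii := congrFun₂ hzero i i
  simp only [Matrix.add_apply, star_apply, Matrix.zero_apply] at hii
  rw [ones_mul_lapC_apply, lapC_commutator_apply_self hA, Complex.star_def,
    Complex.conj_ofReal] at hii
  norm_cast at hii
  linarith

theorem isNormalM_complement_iff_of_bal {A : Matrix m m ℝ} (hA : Bal A) (c : ℂ) :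
    IsNormalM (c • 1 - of (fun _ _ => 1) - lapC A) ↔ IsNormalM (lapC A) := by
  rw [IsNormalM, IsNormalM, ← sub_eq_zero, commutator_complement_lapC, ones_mul_lapC_of_bal hA,
    star_zero, add_zero, add_zero, sub_eq_zero]

theorem isNormalM_complement_iff {A : Matrix m m ℝ} (hA : IsAdj A) (c : ℂ) :
    IsNormalM (c • 1 - of (fun _ _ => 1) - lapC A) ↔ IsNormalM (lapC A) :=
  ⟨fun h => (isNormalM_complement_iff_of_bal (bal_of_isNormalM_complement hA c h) c).1 h,
    fun h => (isNormalM_complement_iff_of_bal (bal_of_isNormalM_lapC hA h) c).2 h⟩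

end ComplementLaplacian

section Restriction

variable {m : Type*} [Fintype m] [DecidableEq m]

theorem conjTranspose_mul_complement_mul {k : Type*} [Fintype k] [DecidableEq k]
    {Q : Matrix m k ℂ} (hQ : IsRestrictor Q) (L : Matrix m m ℂ) (c : ℂ) :
    Qᴴ * (c • 1 - of (fun _ _ => 1) - L) * Q = c • 1 - Qᴴ * L * Q := by
  have hQJ : Qᴴ * (of (fun _ _ => 1) : Matrix m m ℂ) = 0 := by
    ext i j
    simpa [mul_apply, mulVec, dotProduct] using congrFun hQ.2 i
  rw [Matrix.mul_sub, Matrix.mul_sub, hQJ, Matrix.mul_smul, Matrix.mul_one, Matrix.sub_mul,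
    Matrix.sub_mul, Matrix.smul_mul, hQ.1, Matrix.zero_mul, sub_zero]

theorem star_dotProduct_complement_mulVec (L : Matrix m m ℂ) (c : ℂ) {x : EuclideanSpace ℂ m}
    (hx : ‖x‖ = 1) (he : star (x : m → ℂ) ⬝ᵥ (fun _ => 1) = 0) :
    star (x : m → ℂ) ⬝ᵥ (c • 1 - of (fun _ _ => 1) - L) *ᵥ (x : m → ℂ)
      = c - star (x : m → ℂ) ⬝ᵥ L *ᵥ (x : m → ℂ) := by
  have hxx : star (x : m → ℂ) ⬝ᵥ (x : m → ℂ) = 1 := by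
    rw [dotProduct_comm, ← EuclideanSpace.inner_eq_star_dotProduct, inner_self_eq_norm_sq_to_K,
      hx, RCLike.ofReal_one, one_pow]
  rw [Matrix.sub_mulVec, Matrix.sub_mulVec, Matrix.smul_mulVec, Matrix.one_mulVec, ones_mulVec,
    dotProduct_sub, dotProduct_sub, dotProduct_smul, dotProduct_smul, hxx, he, smul_zero,
    smul_eq_mul, mul_one, sub_zero]

theorem rnr_complement (L : Matrix m m ℂ) (c : ℂ) :
    rnr (c • 1 - of (fun _ _ => 1) - L) = (c - ·) '' rnr L := by
  ext z
  constructor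
  · rintro ⟨x, hx, he, rfl⟩
    exact ⟨_, ⟨x, hx, he, rfl⟩, (star_dotProduct_complement_mulVec L c hx he).symm⟩
  · rintro ⟨_, ⟨x, hx, he, rfl⟩, rfl⟩
    exact ⟨x, hx, he, (star_dotProduct_complement_mulVec L c hx he).symm⟩

end Restriction

/-- With `L̄ = (n·I - e·eᵀ) - L` the Laplacian of the complement digraph:
(a) `L` is normal iff `L̄` is normal; (b) `QᴴLQ` is normal iff `QᴴL̄Q` is normal;
(c) `W_r(L)` is the convex hull of the spectrum of `QᴴLQ` iff the same holds for `L̄`.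
Consequently `Γ` is normal (resp. restricted-normal, resp. pseudo-normal) iff `Γ̄` is. -/
theorem classes_closed_under_complement {n : ℕ}
    (A : Matrix (Fin n) (Fin n) ℝ) (hA : IsAdj A)
    (Q : Matrix (Fin n) (Fin (n - 1)) ℂ) (hQ : IsRestrictor Q)
    (L Lbar : Matrix (Fin n) (Fin n) ℂ) (hL : L = lapC A)
    (hLbar : Lbar = (n : ℂ) • (1 : Matrix (Fin n) (Fin n) ℂ)
        - (Matrix.of fun _ _ => (1 : ℂ)) - L) :
    (IsNormalM L ↔ IsNormalM Lbar) ∧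
    (IsNormalM (Qᴴ * L * Q) ↔ IsNormalM (Qᴴ * Lbar * Q)) ∧
    (rnr L = convexHull ℝ (spectrum ℂ (Qᴴ * L * Q)) ↔
      rnr Lbar = convexHull ℝ (spectrum ℂ (Qᴴ * Lbar * Q))) ∧
    ((¬ IsNormalM L ∧ IsNormalM (Qᴴ * L * Q)) ↔
      (¬ IsNormalM Lbar ∧ IsNormalM (Qᴴ * Lbar * Q))) ∧
    ((¬ IsNormalM L ∧ ¬ IsNormalM (Qᴴ * L * Q) ∧
        rnr L = convexHull ℝ (spectrum ℂ (Qᴴ * L * Q))) ↔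
      (¬ IsNormalM Lbar ∧ ¬ IsNormalM (Qᴴ * Lbar * Q) ∧
        rnr Lbar = convexHull ℝ (spectrum ℂ (Qᴴ * Lbar * Q)))) := by
  have hQbar : Qᴴ * Lbar * Q = (n : ℂ) • 1 - Qᴴ * L * Q := by
    rw [hLbar, conjTranspose_mul_complement_mul hQ]
  have ha : IsNormalM L ↔ IsNormalM Lbar := by
    rw [hLbar, hL, isNormalM_complement_iff hA]
  have hb : IsNormalM (Qᴴ * L * Q) ↔ IsNormalM (Qᴴ * Lbar * Q) := by
    rw [hQbar, isNormalM_smul_one_sub_iff]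
  have hc : rnr L = convexHull ℝ (spectrum ℂ (Qᴴ * L * Q)) ↔
      rnr Lbar = convexHull ℝ (spectrum ℂ (Qᴴ * Lbar * Q)) := by
    rw [hQbar, hLbar, rnr_complement, spectrum_smul_one_sub, ← image_const_sub_convexHull,
      (Set.image_injective.2 sub_right_injective).eq_iff]
  exact ⟨ha, hb, hc, and_congr (not_congr ha) hb,
    and_congr (not_congr ha) (and_congr (not_congr hb) hc)⟩
end

section
/- Let Γ₁ and Γ₂ be balanced digraphs of orders n₁ ≥ 1 and n₂ ≥ 1 with Laplacians L₁ and L₂, and let L be the block-diagonal matrix fromBlocks L₁ 0 0 L₂, which is the Laplacian of the disjoint union Γ₁ ⊔ Γ₂ of order n = n₁ + n₂. Then W_r(L) = convexHull ℝ ( W_r(L₁) ∪ W_r(L₂) ∪ {0} ), where ℂ is regarded as a real vector space. -/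
open Matrix

/-!
`W_r(M)` is the numerical range of `M` compressed to `e^⊥`, hence convex by the
Toeplitz–Hausdorff argument: for unit vectors with values `0` and `1` (after an affine
normalisation), a phase rotation of the second one makes the form real along the real line through
them, and solving a quadratic equation hits any `t ∈ [0, 1)`. This gives `⊇`, since zero-padding
embeds `W_r(L₁)` and `W_r(L₂)` into `W_r(L)` and `L` kills the block vector `(n₂ e, -n₁ e) ⊥ e`.
For `⊆`, split a unit `x ⊥ e` into blocks `x₁, x₂` and project each onto `e^⊥`. Since `Lᵢ e = 0`
and, by balance, `eᴴ Lᵢ = 0`, this does not change `xᵢᴴ Lᵢ xᵢ` and does not increase norms, so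
`xᴴ L x = t₁ w₁ + t₂ w₂` with `wᵢ ∈ W_r(Lᵢ) ∪ {0}`, `tᵢ ≥ 0` and `t₁ + t₂ ≤ 1`.
-/

open scoped InnerProductSpace ComplexConjugate

theorem Complex.exists_norm_eq_one_mul_im_eq_zero (γ : ℂ) :
    ∃ ε : ℂ, ‖ε‖ = 1 ∧ (ε * γ).im = 0 := by
  refine ⟨exp (-(γ.arg : ℂ) * I), by simpa using norm_exp_ofReal_mul_I (-γ.arg), ?_⟩
  conv_lhs => rw [← norm_mul_exp_arg_mul_I γ]
  rw [mul_left_comm, ← exp_add]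
  simp

theorem Convex.smul_add_smul_mem_of_zero_mem {𝕜 E : Type*} [Field 𝕜] [LinearOrder 𝕜]
    [IsStrictOrderedRing 𝕜] [AddCommGroup E] [Module 𝕜 E] {s : Set E} (hs : Convex 𝕜 s)
    (h₀ : 0 ∈ s) {x y : E} (hx : x ∈ s) (hy : y ∈ s) {a b : 𝕜} (ha : 0 ≤ a) (hb : 0 ≤ b)
    (hab : a + b ≤ 1) : a • x + b • y ∈ s := by
  simpa [Fin.sum_univ_three] using hs.sum_mem (t := Finset.univ) (w := ![a, b, 1 - a - b])
    (z := ![x, y, 0]) (by intro i _; fin_cases i <;> simp <;> linarith)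
    (by simp [Fin.sum_univ_three]) (by intro i _; fin_cases i <;> assumption)

section NumericalRange

variable {E : Type*} [NormedAddCommGroup E] [InnerProductSpace ℂ E]

def numericalRange (T : E →ₗ[ℂ] E) (S : Submodule ℂ E) : Set ℂ :=
  {z | ∃ x ∈ S, ‖x‖ = 1 ∧ ⟪x, T x⟫_ℂ = z}

variable (T : E →ₗ[ℂ] E) (S : Submodule ℂ E)

theorem inner_map_self_div_mem_numericalRange {x : E} (hxS : x ∈ S) (hx : x ≠ 0) :
    ⟪x, T x⟫_ℂ / (‖x‖ : ℂ) ^ 2 ∈ numericalRange T S := by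
  refine ⟨(‖x‖⁻¹ : ℂ) • x, S.smul_mem _ hxS, norm_smul_inv_norm hx, ?_⟩
  rw [map_smul, inner_smul_left, inner_smul_right, ← mul_assoc, map_inv₀, Complex.conj_ofReal,
    ← mul_inv, ← sq, div_eq_inv_mul]

theorem numericalRange_smul_sub_smul_id (c d : ℂ) :
    numericalRange (c • (T - d • LinearMap.id : E →ₗ[ℂ] E)) S =
      (fun z => c * (z - d)) '' numericalRange T S := by
  have key (x : E) (hx : ‖x‖ = 1) :
      ⟪x, (c • (T - d • LinearMap.id : E →ₗ[ℂ] E)) x⟫_ℂ = c * (⟪x, T x⟫_ℂ - d) := by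
    simp [inner_self_eq_norm_sq_to_K, hx]
  ext z
  constructor
  · rintro ⟨x, hxS, hx, rfl⟩
    exact ⟨_, ⟨x, hxS, hx, rfl⟩, (key x hx).symm⟩
  · rintro ⟨_, ⟨x, hxS, hx, rfl⟩, rfl⟩
    exact ⟨x, hxS, hx, key x hx⟩

variable {T S} in
theorem ofReal_mem_numericalRange_of_im_eq_zero {x w : E} (hxS : x ∈ S) (hwS : w ∈ S)
    (hx : ‖x‖ = 1) (hw : ‖w‖ = 1) (hTx : ⟪x, T x⟫_ℂ = 0) (hTw : ⟪w, T w⟫_ℂ = 1)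
    (him : (⟪x, T w⟫_ℂ + ⟪w, T x⟫_ℂ).im = 0) {t : ℝ} (ht₀ : 0 ≤ t) (ht₁ : t < 1) :
    (t : ℂ) ∈ numericalRange T S := by
  set K := (⟪x, T w⟫_ℂ + ⟪w, T x⟫_ℂ).re
  set r := (⟪x, w⟫_ℂ).re
  have hform (τ : ℝ) : ⟪x + (τ : ℂ) • w, T (x + (τ : ℂ) • w)⟫_ℂ = τ * K + τ ^ 2 := by
    have hK : ⟪x, T w⟫_ℂ + ⟪w, T x⟫_ℂ = K := Complex.ext rfl (by simpa using him)
    simp only [map_add, map_smul, inner_add_left, inner_add_right, inner_smul_left,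
      inner_smul_right, Complex.conj_ofReal, hTx, hTw]
    linear_combination (τ : ℂ) * hK
  have hnorm (τ : ℝ) : ‖x + (τ : ℂ) • w‖ ^ 2 = 1 + 2 * τ * r + τ ^ 2 := by
    rw [@norm_add_sq ℂ, inner_smul_right, RCLike.re_to_complex, Complex.re_ofReal_mul, norm_smul,
      hx, hw, Complex.norm_real, Real.norm_eq_abs, mul_one, sq_abs]
    ring
  -- by `hform` and `hnorm`, this says `⟪z, T z⟫ = t ‖z‖²` for `z = x + τ w`
  obtain ⟨τ, hτ⟩ : ∃ τ : ℝ, (1 - t) * (τ * τ) + (K - 2 * t * r) * τ + -t = 0 := by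
    refine exists_quadratic_eq_zero (by linarith : 0 < 1 - t).ne'
      ⟨√(discrim (1 - t) (K - 2 * t * r) (-t)), (Real.mul_self_sqrt ?_).symm⟩
    rw [discrim]
    nlinarith [sq_nonneg (K - 2 * t * r)]
  have hz : x + (τ : ℂ) • w ≠ 0 := by
    intro hz
    have hxw : x = -((τ : ℂ) • w) := eq_neg_of_add_eq_zero_left hz
    have hτ : (τ : ℂ) ^ 2 = 0 := by
      rw [← hTx, hxw, map_neg, inner_neg_left, inner_neg_right, neg_neg, map_smul,
        inner_smul_left, inner_smul_right, hTw, Complex.conj_ofReal]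
      ring
    rw [hxw, pow_eq_zero_iff two_ne_zero |>.1 hτ] at hx
    simp at hx
  convert inner_map_self_div_mem_numericalRange T S (add_mem hxS (S.smul_mem _ hwS)) hz using 1
  have hpos : (‖x + (τ : ℂ) • w‖ : ℂ) ^ 2 ≠ 0 := by simpa using hz
  have hquad : t * (1 + 2 * τ * r + τ ^ 2) = τ * K + τ ^ 2 := by linear_combination -hτ
  rw [eq_div_iff hpos, hform, ← Complex.ofReal_pow, hnorm]
  exact_mod_cast hquad

variable {T S} in
theorem ofReal_mem_numericalRange {t : ℝ} (h₀ : (0 : ℂ) ∈ numericalRange T S)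
    (h₁ : (1 : ℂ) ∈ numericalRange T S) (ht₀ : 0 ≤ t) (ht₁ : t < 1) :
    (t : ℂ) ∈ numericalRange T S := by
  obtain ⟨x, hxS, hx, hTx⟩ := h₀
  obtain ⟨y, hyS, hy, hTy⟩ := h₁
  -- `Im (ε u + conj ε v) = Im (ε (u - conj v))`: the phase `ε` makes the cross term of
  -- `x` and `ε • y` real
  obtain ⟨ε, hε, him⟩ :=
    Complex.exists_norm_eq_one_mul_im_eq_zero (⟪x, T y⟫_ℂ - conj ⟪y, T x⟫_ℂ)
  refine ofReal_mem_numericalRange_of_im_eq_zero hxS (S.smul_mem ε hyS) hx ?_ hTx ?_ ?_ ht₀ ht₁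
  · rw [norm_smul, hε, hy, one_mul]
  · rw [map_smul, inner_smul_left, inner_smul_right, hTy, mul_one, Complex.conj_mul', hε]
    simp
  · rw [map_smul, inner_smul_left, inner_smul_right]
    simp only [Complex.add_im, Complex.mul_im, Complex.sub_re, Complex.sub_im, Complex.conj_re,
      Complex.conj_im] at him ⊢
    linarith

theorem convex_numericalRange : Convex ℝ (numericalRange T S) := by
  refine convex_iff_pairwise_pos.2 fun a ha b hb hab s t _ ht hst => ?_
  have hba : b - a ≠ 0 := sub_ne_zero.2 hab.symm
  set T' : E →ₗ[ℂ] E := (b - a)⁻¹ • (T - a • LinearMap.id)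
  have himage : numericalRange T' S = (fun z => (b - a)⁻¹ * (z - a)) '' numericalRange T S :=
    numericalRange_smul_sub_smul_id T S (b - a)⁻¹ a
  have h₀ : (0 : ℂ) ∈ numericalRange T' S := himage ▸ ⟨a, ha, by simp⟩
  have h₁ : (1 : ℂ) ∈ numericalRange T' S := himage ▸ ⟨b, hb, inv_mul_cancel₀ hba⟩
  obtain ⟨z, hz, hzt⟩ := himage ▸ ofReal_mem_numericalRange h₀ h₁ ht.le (by linarith)
  rw [inv_mul_eq_iff_eq_mul₀ hba] at hzt
  convert hz using 1
  rw [eq_sub_of_add_eq hst, Complex.real_smul, Complex.real_smul]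
  push_cast
  linear_combination -hzt

variable {T} in
theorem exists_inner_map_self_eq_mul_of_map_eq_zero {e : E} (hTe : T e = 0)
    (hTe' : ∀ v, ⟪e, T v⟫_ℂ = 0) (x : E) :
    ∃ t ∈ Set.Icc (0 : ℝ) (‖x‖ ^ 2), ∃ w ∈ insert 0 (numericalRange T (ℂ ∙ e)ᗮ),
      ⟪x, T x⟫_ℂ = t * w := by
  set y := (ℂ ∙ e)ᗮ.starProjection x
  have hyS : y ∈ (ℂ ∙ e)ᗮ := (ℂ ∙ e)ᗮ.starProjection_apply_mem x
  obtain ⟨c, hc⟩ := Submodule.mem_span_singleton.1 ((ℂ ∙ e).starProjection_apply_mem x)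
  have hxy : x = y + c • e := by simp [y, hc]
  have hform : ⟪x, T x⟫_ℂ = ⟪y, T y⟫_ℂ := by
    rw [hxy, map_add, map_smul, hTe, smul_zero, add_zero, inner_add_left, inner_smul_left, hTe',
      mul_zero, add_zero]
  refine ⟨‖y‖ ^ 2, ⟨by positivity, by gcongr; exact (ℂ ∙ e)ᗮ.norm_starProjection_apply_le x⟩,
    ⟪y, T y⟫_ℂ / (‖y‖ : ℂ) ^ 2, ?_, ?_⟩
  · rcases eq_or_ne y 0 with hy | hy
    · simp [hy]
    · exact Or.inr (inner_map_self_div_mem_numericalRange T _ hyS hy)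
  · rcases eq_or_ne y 0 with hy | hy
    · simp [hform, hy]
    · have hy' : (‖y‖ : ℂ) ≠ 0 := by simpa using hy
      rw [hform, Complex.ofReal_pow, mul_div_cancel₀ _ (pow_ne_zero 2 hy')]

end NumericalRange

section RestrictedNumericalRange

variable {m : Type*} [Fintype m]

theorem rnr_eq_numericalRange [DecidableEq m] (M : Matrix m m ℂ) :
    rnr M = numericalRange (toEuclideanLin M) (ℂ ∙ WithLp.toLp 2 (fun _ => (1 : ℂ)))ᗮ := by
  ext z
  simp only [rnr, numericalRange, Submodule.mem_orthogonal_singleton_iff_inner_left,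
    EuclideanSpace.inner_eq_star_dotProduct, toLpLin_apply, dotProduct_comm _ (star _)]
  constructor <;> rintro ⟨x, h₁, h₂, h₃⟩ <;> exact ⟨x, h₂, h₁, h₃.symm⟩

theorem convex_rnr (M : Matrix m m ℂ) : Convex ℝ (rnr M) := by
  classical
  exact rnr_eq_numericalRange M ▸ convex_numericalRange _ _

theorem exists_star_dotProduct_mulVec_eq_mul {M : Matrix m m ℂ} (hM : M *ᵥ (fun _ => 1) = 0)
    (hM' : (fun _ => 1) ᵥ* M = 0) (x : EuclideanSpace ℂ m) :
    ∃ t ∈ Set.Icc (0 : ℝ) (‖x‖ ^ 2), ∃ w ∈ insert 0 (rnr M),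
      star (x : m → ℂ) ⬝ᵥ M *ᵥ (x : m → ℂ) = t * w := by
  classical
  have he (v : EuclideanSpace ℂ m) :
      ⟪(WithLp.toLp 2 (fun _ => 1) : EuclideanSpace ℂ m), toEuclideanLin M v⟫_ℂ = 0 := by
    rw [EuclideanSpace.inner_eq_star_dotProduct, toLpLin_apply]
    simp only [Pi.star_def, star_one]
    rw [dotProduct_comm, dotProduct_mulVec, hM', zero_dotProduct]
  obtain ⟨t, ht, w, hw, h⟩ :=
    exists_inner_map_self_eq_mul_of_map_eq_zero (by simp [hM]) he x
  refine ⟨t, ht, w, rnr_eq_numericalRange M ▸ hw, ?_⟩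
  rw [← h, EuclideanSpace.inner_eq_star_dotProduct, dotProduct_comm]
  rfl

end RestrictedNumericalRange

section DisjointUnion

variable {m₁ m₂ : Type*} [Fintype m₁] [Fintype m₂] (M₁ : Matrix m₁ m₁ ℂ) (M₂ : Matrix m₂ m₂ ℂ)

theorem star_dotProduct_fromBlocks_mulVec (x : m₁ ⊕ m₂ → ℂ) :
    star x ⬝ᵥ fromBlocks M₁ 0 0 M₂ *ᵥ x =
      star (x ∘ Sum.inl) ⬝ᵥ M₁ *ᵥ (x ∘ Sum.inl) + star (x ∘ Sum.inr) ⬝ᵥ M₂ *ᵥ (x ∘ Sum.inr) := by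
  simp [fromBlocks_mulVec, dotProduct, Fintype.sum_sum_type]

theorem rnr_subset_rnr_fromBlocks_left : rnr M₁ ⊆ rnr (fromBlocks M₁ 0 0 M₂) := by
  rintro _ ⟨x, hx, hxe, rfl⟩
  refine ⟨WithLp.toLp 2 (Sum.elim x 0), ?_, ?_, ?_⟩
  · simpa [EuclideanSpace.norm_eq, Fintype.sum_sum_type] using hx
  · simpa [dotProduct, Fintype.sum_sum_type] using hxe
  · simp [star_dotProduct_fromBlocks_mulVec]

theorem rnr_subset_rnr_fromBlocks_right : rnr M₂ ⊆ rnr (fromBlocks M₁ 0 0 M₂) := by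
  rintro _ ⟨x, hx, hxe, rfl⟩
  refine ⟨WithLp.toLp 2 (Sum.elim 0 x), ?_, ?_, ?_⟩
  · simpa [EuclideanSpace.norm_eq, Fintype.sum_sum_type] using hx
  · simpa [dotProduct, Fintype.sum_sum_type] using hxe
  · simp [star_dotProduct_fromBlocks_mulVec]

variable {M₁ M₂}

theorem zero_mem_rnr_fromBlocks [Nonempty m₁] [Nonempty m₂] (h₁ : M₁ *ᵥ (fun _ => 1) = 0)
    (h₂ : M₂ *ᵥ (fun _ => 1) = 0) : 0 ∈ rnr (fromBlocks M₁ 0 0 M₂) := by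
  classical
  set v : EuclideanSpace ℂ (m₁ ⊕ m₂) := WithLp.toLp 2
    (Sum.elim ((Fintype.card m₂ : ℂ) • fun _ => 1) (-(Fintype.card m₁ : ℂ) • fun _ => 1))
  have hv : v ≠ 0 := fun h => by
    simpa [v] using congrArg (· (Sum.inl (Classical.arbitrary m₁))) h
  have hvS : v ∈ (ℂ ∙ (WithLp.toLp 2 (fun _ => 1) : EuclideanSpace ℂ (m₁ ⊕ m₂)))ᗮ := by
    rw [Submodule.mem_orthogonal_singleton_iff_inner_left, EuclideanSpace.inner_eq_star_dotProduct]
    simp [v, dotProduct, Fintype.sum_sum_type]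
    ring
  have hTv : toEuclideanLin (fromBlocks M₁ 0 0 M₂) v = 0 := by
    simp [v, toLpLin_apply, fromBlocks_mulVec, mulVec_neg, mulVec_smul, h₁, h₂]
  rw [rnr_eq_numericalRange]
  simpa [hTv] using
    inner_map_self_div_mem_numericalRange (toEuclideanLin (fromBlocks M₁ 0 0 M₂)) _ hvS hv

theorem rnr_fromBlocks_subset_convexHull (h₁ : M₁ *ᵥ (fun _ => 1) = 0)
    (h₁' : (fun _ => 1) ᵥ* M₁ = 0) (h₂ : M₂ *ᵥ (fun _ => 1) = 0)
    (h₂' : (fun _ => 1) ᵥ* M₂ = 0) :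
    rnr (fromBlocks M₁ 0 0 M₂) ⊆ convexHull ℝ (rnr M₁ ∪ rnr M₂ ∪ {0}) := by
  rintro _ ⟨x, hx, -, rfl⟩
  obtain ⟨t₁, ht₁, w₁, hw₁, hq₁⟩ :=
    exists_star_dotProduct_mulVec_eq_mul h₁ h₁' (WithLp.toLp 2 (x ∘ Sum.inl))
  obtain ⟨t₂, ht₂, w₂, hw₂, hq₂⟩ :=
    exists_star_dotProduct_mulVec_eq_mul h₂ h₂' (WithLp.toLp 2 (x ∘ Sum.inr))
  have hnorm : ‖(WithLp.toLp 2 (x ∘ Sum.inl) : EuclideanSpace ℂ m₁)‖ ^ 2 +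
      ‖(WithLp.toLp 2 (x ∘ Sum.inr) : EuclideanSpace ℂ m₂)‖ ^ 2 = 1 := by
    have h := EuclideanSpace.norm_sq_eq x
    rw [hx, Fintype.sum_sum_type] at h
    simpa [EuclideanSpace.norm_sq_eq] using h.symm
  set C := convexHull ℝ (rnr M₁ ∪ rnr M₂ ∪ {0})
  have h₀ : (0 : ℂ) ∈ C := subset_convexHull ℝ _ (by simp)
  have hw₁C : w₁ ∈ C := by
    rcases hw₁ with rfl | h
    exacts [h₀, subset_convexHull ℝ _ (by simp [h])]
  have hw₂C : w₂ ∈ C := by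
    rcases hw₂ with rfl | h
    exacts [h₀, subset_convexHull ℝ _ (by simp [h])]
  dsimp only at hq₁ hq₂
  rw [star_dotProduct_fromBlocks_mulVec, hq₁, hq₂, ← Complex.real_smul, ← Complex.real_smul]
  exact (convex_convexHull ℝ _).smul_add_smul_mem_of_zero_mem h₀ hw₁C hw₂C ht₁.1 ht₂.1
    (by linarith [ht₁.2, ht₂.2])

theorem rnr_fromBlocks_eq_convexHull [Nonempty m₁] [Nonempty m₂] (h₁ : M₁ *ᵥ (fun _ => 1) = 0)
    (h₁' : (fun _ => 1) ᵥ* M₁ = 0) (h₂ : M₂ *ᵥ (fun _ => 1) = 0)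
    (h₂' : (fun _ => 1) ᵥ* M₂ = 0) :
    rnr (fromBlocks M₁ 0 0 M₂) = convexHull ℝ (rnr M₁ ∪ rnr M₂ ∪ {0}) :=
  (rnr_fromBlocks_subset_convexHull h₁ h₁' h₂ h₂').antisymm <| convexHull_min
    (Set.union_subset (Set.union_subset (rnr_subset_rnr_fromBlocks_left M₁ M₂)
      (rnr_subset_rnr_fromBlocks_right M₁ M₂))
      (Set.singleton_subset_iff.2 (zero_mem_rnr_fromBlocks h₁ h₂)))
    (convex_rnr _)

end DisjointUnion

section Laplacian

variable {m : Type*} [Fintype m] [DecidableEq m]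

theorem lapC_mulVec_one (A : Matrix m m ℝ) : lapC A *ᵥ (fun _ => 1) = 0 := by
  ext i
  simp [lapC, lap, mulVec, dotProduct, diagonal_apply, Finset.sum_sub_distrib,
    apply_ite (fun x : ℝ => (x : ℂ))]

theorem one_vecMul_lapC {A : Matrix m m ℝ} (hA : Bal A) : (fun _ => 1) ᵥ* lapC A = 0 := by
  ext j
  simp [lapC, lap, vecMul, dotProduct, diagonal_apply, Finset.sum_sub_distrib,
    apply_ite (fun x : ℝ => (x : ℂ))]
  exact_mod_cast sub_eq_zero.2 (hA j)

end Laplacian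

theorem rnr_disjoint_union_general {n₁ n₂ : ℕ} (h₁ : 1 ≤ n₁) (h₂ : 1 ≤ n₂)
    (A₁ : Matrix (Fin n₁) (Fin n₁) ℝ) (A₂ : Matrix (Fin n₂) (Fin n₂) ℝ)
    (hb₁ : Bal A₁) (hb₂ : Bal A₂) :
    rnr (Matrix.fromBlocks (lapC A₁) 0 0 (lapC A₂)) =
      convexHull ℝ (rnr (lapC A₁) ∪ rnr (lapC A₂) ∪ {0}) :=
  have : Nonempty (Fin n₁) := ⟨⟨0, h₁⟩⟩
  have : Nonempty (Fin n₂) := ⟨⟨0, h₂⟩⟩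
  rnr_fromBlocks_eq_convexHull (lapC_mulVec_one A₁) (one_vecMul_lapC hb₁)
    (lapC_mulVec_one A₂) (one_vecMul_lapC hb₂)

/-- For balanced digraphs `Γ₁, Γ₂`, the restricted numerical range of the
disjoint union satisfies `W_r(Γ₁ ⊔ Γ₂) = conv(W_r(Γ₁) ∪ W_r(Γ₂) ∪ {0})`. -/
theorem rnr_disjoint_union {n₁ n₂ : ℕ} (h₁ : 1 ≤ n₁) (h₂ : 1 ≤ n₂)
    (A₁ : Matrix (Fin n₁) (Fin n₁) ℝ) (A₂ : Matrix (Fin n₂) (Fin n₂) ℝ)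
    (hA₁ : IsAdj A₁) (hA₂ : IsAdj A₂) (hb₁ : Bal A₁) (hb₂ : Bal A₂) :
    rnr (Matrix.fromBlocks (lapC A₁) 0 0 (lapC A₂)) =
      convexHull ℝ (rnr (lapC A₁) ∪ rnr (lapC A₂) ∪ {0}) :=
  rnr_disjoint_union_general h₁ h₂ A₁ A₂ hb₁ hb₂
end

section
/- Let Γ be a digraph of order n with adjacency matrix A = [a_ij] and Laplacian L. Then L is a normal matrix if and only if Γ is balanced and for all pairs of distinct vertices i ≠ j one has (a_ij − a_ji)·(d⁺(j) − d⁺(i)) = Σ_{k ≠ i, k ≠ j} (a_ik·a_jk − a_ki·a_kj). -/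
/-! With `D = diagonal d⁺` the Laplacian is `L = D - A`, and expanding gives
`LᵀL - LLᵀ = (A - Aᵀ) D - D (A - Aᵀ) + (AᵀA - AAᵀ)`, whose `(i, j)` entry is
`(a_ij - a_ji)(d⁺(j) - d⁺(i)) - ∑_k (a_ik a_jk - a_ki a_kj)`. On the diagonal the sum is
`d⁺(i) - d⁻(i)` because `a² = a` for `a ∈ {0, 1}`; off the diagonal its terms `k = i` and
`k = j` vanish because `A` has zero diagonal. -/

open Matrix

variable {m R : Type*} [Fintype m]

theorem transpose_mul_self_sub_self_mul_transpose_diagonal_sub [DecidableEq m] [Ring R]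
    (d : m → R) (A : Matrix m m R) :
    (diagonal d - A)ᵀ * (diagonal d - A) - (diagonal d - A) * (diagonal d - A)ᵀ =
      (A - Aᵀ) * diagonal d - diagonal d * (A - Aᵀ) + (Aᵀ * A - A * Aᵀ) := by
  simp only [transpose_sub, diagonal_transpose, mul_sub, sub_mul]
  abel

theorem isNormalM_diagonal_sub_iff [DecidableEq m] [CommRing R] [StarRing R] [TrivialStar R]
    (d : m → R) (A : Matrix m m R) :
    IsNormalM (diagonal d - A) ↔
      ∀ i j, (A i j - A j i) * (d j - d i) = ∑ k, (A i k * A j k - A k i * A k j) := by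
  rw [IsNormalM, star_eq_conjTranspose, conjTranspose_eq_transpose_of_trivial, ← sub_eq_zero,
    transpose_mul_self_sub_self_mul_transpose_diagonal_sub, ← Matrix.ext_iff]
  refine forall₂_congr fun i j => ?_
  simp only [Matrix.add_apply, Matrix.sub_apply, mul_diagonal, diagonal_mul, Matrix.zero_apply]
  simp only [transpose_apply, mul_apply, Finset.sum_sub_distrib]
  constructor <;> intro h <;> linear_combination h

theorem sum_filter_ne_ne_eq_sum_of_diag_zero [DecidableEq m] [Ring R] {A : Matrix m m R}
    (hA : ∀ k, A k k = 0) (i j : m) :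
    ∑ k ∈ Finset.univ.filter (fun k => k ≠ i ∧ k ≠ j), (A i k * A j k - A k i * A k j) =
      ∑ k, (A i k * A j k - A k i * A k j) := by
  refine Finset.sum_filter_of_ne fun k _ hk => ⟨?_, ?_⟩ <;> rintro rfl <;> simp [hA] at hk

theorem IsAdj.mul_self_apply {A : Matrix m m ℝ} (hA : IsAdj A) (i j : m) :
    A i j * A i j = A i j := by
  rcases hA.1 i j with h | h <;> simp [h]

/-- `L` is normal iff `Γ` is balanced and for all distinct vertices
`i ≠ j`, `(a_ij - a_ji)(d⁺(j) - d⁺(i)) = ∑_{k ≠ i,j} (a_ik a_jk - a_ki a_kj)`. -/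
theorem normal_iff_balanced_and_identity {n : ℕ}
    (A : Matrix (Fin n) (Fin n) ℝ) (hA : IsAdj A) :
    IsNormalM (lap A) ↔
      (Bal A ∧ ∀ i j, i ≠ j →
        (A i j - A j i) * ((∑ k, A j k) - (∑ k, A i k)) =
          ∑ k ∈ Finset.univ.filter (fun k => k ≠ i ∧ k ≠ j),
            (A i k * A j k - A k i * A k j)) := by
  simp only [lap, isNormalM_diagonal_sub_iff, sum_filter_ne_ne_eq_sum_of_diag_zero hA.2]
  refine ⟨fun h => ⟨fun i => ?_, fun i j _ => h i j⟩, fun ⟨hbal, hid⟩ i j => ?_⟩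
  · have hii := h i i
    simp only [sub_self, zero_mul, hA.mul_self_apply, Finset.sum_sub_distrib] at hii
    linarith
  · rcases eq_or_ne i j with rfl | hij
    · simp only [sub_self, zero_mul, hA.mul_self_apply, Finset.sum_sub_distrib, hbal i]
    · exact hid i j hij
end

section
/- Let Γ₁ and Γ₂ be digraphs of orders n₁ ≥ 1 and n₂ ≥ 1 with Laplacians L₁ and L₂, let L = fromBlocks (L₁ + n₂·I) (−J_{n₁×n₂}) 0 L₂ be the Laplacian of the directed join Γ₁ →∨ Γ₂, and let Q be a restrictor matrix of order n = n₁ + n₂. Then Γ₁ →∨ Γ₂ is restricted-normal (that is, QᴴLQ is a normal matrix and L is not a normal matrix) if and only if L₁ and L₂ are both normal matrices. -/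
/-!
Let `P = I - J/n` be the centering matrix. The columns of a restrictor `Q` are an orthonormal basis
of `1ᗮ`, so `Q Qᴴ = P` and `QᴴLQ` is normal iff `PLP` is. The join Laplacian is never normal: a
normal matrix with `L 1 = 0` also has `1ᵀ L = 0`, but the block `-J` gives the columns of `Γ₂` total
column sum `-n₁ n₂`.

Write `L = D + N` with `D = diag(L₁, L₂)` and `N` the Laplacian of the join of two edgeless
digraphs. If `L₁` and `L₂` are balanced, `D` commutes with `P` and with `N`, and `PNP` is symmetric,
so `PLP = D + PNP` is normal iff `D` is, i.e. iff `L₁` and `L₂` are. Normal Laplacians are balanced.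
Conversely, if `PLP` is normal, then `P 1_{Γ₁}` is an eigenvector of `PLP` with eigenvalue `n₂`, hence
also of its transpose, and this forces every column sum of `L₁` and `L₂` to vanish.
-/

open Matrix

theorem isStarNormal_add_iff_of_commute {R : Type*} [Ring R] [StarRing R] {a s : R}
    (hs : IsSelfAdjoint s) (h : Commute a s) : IsStarNormal (a + s) ↔ IsStarNormal a := by
  have := hs.isStarNormal
  constructor
  · intro ha
    have hc : Commute (a + s) (star s) := by rw [hs.star_eq]; exact h.add_left (Commute.refl s)
    simpa using hc.isStarNormal_sub
  · intro ha
    exact (show Commute a (star s) by rw [hs.star_eq]; exact h).isStarNormal_add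

namespace Matrix

variable {ι κ ν R : Type*} [Fintype ι]

theorem isNormalM_iff_isStarNormal [NonUnitalNonAssocSemiring R] [Star R] (M : Matrix ι ι R) :
    IsNormalM M ↔ IsStarNormal M := by
  rw [isStarNormal_iff, commute_iff_eq]; rfl

theorem isStarNormal_fromBlocks_iff [Fintype κ] [Semiring R] [StarRing R] {A : Matrix ι ι R}
    {D : Matrix κ κ R} : IsStarNormal (fromBlocks A 0 0 D) ↔ IsStarNormal A ∧ IsStarNormal D := by
  simp only [isStarNormal_iff, commute_iff_eq, star_eq_conjTranspose, fromBlocks_conjTranspose,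
    conjTranspose_zero, fromBlocks_multiply, Matrix.mul_zero, Matrix.zero_mul, add_zero, zero_add,
    fromBlocks_inj, true_and]

theorem isStarNormal_mul_mul_conjTranspose_iff [Fintype κ] [DecidableEq κ] [Ring R] [StarRing R]
    {Q : Matrix ι κ R} (hQ : Qᴴ * Q = 1) {X : Matrix κ κ R} :
    IsStarNormal (Q * X * Qᴴ) ↔ IsStarNormal X := by
  have hstar : (Q * X * Qᴴ)ᴴ = Q * Xᴴ * Qᴴ := by
    rw [conjTranspose_mul, conjTranspose_mul, conjTranspose_conjTranspose, Matrix.mul_assoc]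
  have hprod : ∀ Y Z : Matrix κ κ R, Q * Y * Qᴴ * (Q * Z * Qᴴ) = Q * (Y * Z) * Qᴴ := fun Y Z => by
    simp only [Matrix.mul_assoc]; rw [← Matrix.mul_assoc Qᴴ, hQ, Matrix.one_mul]
  have hcancel : ∀ Y : Matrix κ κ R, Qᴴ * (Q * Y * Qᴴ) * Q = Y := fun Y => by
    rw [← Matrix.mul_assoc, ← Matrix.mul_assoc, hQ, Matrix.one_mul, Matrix.mul_assoc, hQ,
      Matrix.mul_one]
  rw [isStarNormal_iff, isStarNormal_iff, commute_iff_eq, commute_iff_eq, star_eq_conjTranspose,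
    star_eq_conjTranspose, hstar, hprod, hprod]
  exact ⟨fun h => by simpa only [hcancel] using congrArg (fun W => Qᴴ * W * Q) h,
    fun h => by rw [h]⟩

theorem isStarNormal_map_ofReal_iff {M : Matrix ι ι ℝ} :
    IsStarNormal (M.map (fun x => (x : ℂ))) ↔ IsStarNormal M := by
  have hmul : ∀ A B : Matrix ι ι ℝ, A.map (fun x => (x : ℂ)) * B.map (fun x => (x : ℂ)) =
      (A * B).map (fun x => (x : ℂ)) := fun A B => (Matrix.map_mul (f := Complex.ofRealHom)).symm
  rw [isStarNormal_iff, isStarNormal_iff, commute_iff_eq, commute_iff_eq, star_eq_conjTranspose,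
    star_eq_conjTranspose, ← conjTranspose_map _ (fun x => (Complex.conj_ofReal x).symm), hmul,
    hmul]
  exact (Matrix.map_injective Complex.ofReal_injective).eq_iff

theorem mul_of_one_eq_zero [NonAssocSemiring R] {M : Matrix κ ι R} (h : M *ᵥ 1 = 0) :
    M * (of fun _ _ => 1 : Matrix ι ν R) = 0 := by
  ext i j
  simpa [mul_apply, mulVec, dotProduct] using congrFun h i

theorem of_one_mul_eq_zero [NonAssocSemiring R] {M : Matrix ι κ R} (h : 1 ᵥ* M = 0) :
    (of fun _ _ => 1 : Matrix ν ι R) * M = 0 := by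
  ext i j
  simpa [mul_apply, vecMul, dotProduct] using congrFun h j

theorem fromBlocks_mulVec_one_eq_zero [Fintype κ] [NonAssocSemiring R] {A : Matrix ι ι R}
    {D : Matrix κ κ R} (hA : A *ᵥ 1 = 0) (hD : D *ᵥ 1 = 0) : fromBlocks A 0 0 D *ᵥ 1 = 0 := by
  ext (i | i) <;> simp [fromBlocks_mulVec, hA, hD]

theorem one_vecMul_fromBlocks_eq_zero [Fintype κ] [NonAssocSemiring R] {A : Matrix ι ι R}
    {D : Matrix κ κ R} (hA : 1 ᵥ* A = 0) (hD : 1 ᵥ* D = 0) : 1 ᵥ* fromBlocks A 0 0 D = 0 := by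
  ext (i | i) <;> simp [vecMul_fromBlocks, hA, hD]

end Matrix

section StarOrdered

variable {ι R : Type*} [Fintype ι] [PartialOrder R]

theorem IsStarNormal.conjTranspose_mulVec_eq_zero [NonUnitalRing R] [StarRing R]
    [StarOrderedRing R] [NoZeroDivisors R] {M : Matrix ι ι R} [hM : IsStarNormal M] {v : ι → R}
    (hv : M *ᵥ v = 0) : Mᴴ *ᵥ v = 0 := by
  rw [← self_mul_conjTranspose_mulVec_eq_zero, ← star_eq_conjTranspose, ← hM.star_comm_self.eq,
    star_eq_conjTranspose, conjTranspose_mul_self_mulVec_eq_zero]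
  exact hv

variable [CommRing R] [StarRing R] [StarOrderedRing R] [NoZeroDivisors R]

theorem IsStarNormal.vecMul_eq_zero [TrivialStar R] {M : Matrix ι ι R} [IsStarNormal M]
    {v : ι → R} (hv : M *ᵥ v = 0) : v ᵥ* M = 0 := by
  rw [← mulVec_transpose, ← conjTranspose_eq_transpose_of_trivial]
  exact IsStarNormal.conjTranspose_mulVec_eq_zero hv

theorem IsStarNormal.conjTranspose_mulVec_eq_smul [DecidableEq ι] {M : Matrix ι ι R}
    [IsStarNormal M] {v : ι → R} {c : R} (hv : M *ᵥ v = c • v) : Mᴴ *ᵥ v = star c • v := by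
  have hcomm : Commute M (star (c • 1)) := by
    rw [star_smul, star_one]; exact (Commute.one_right M).smul_right _
  have h := hcomm.isStarNormal_sub.conjTranspose_mulVec_eq_zero (v := v)
    (by rw [sub_mulVec, hv, smul_mulVec, one_mulVec, sub_self])
  rwa [conjTranspose_sub, conjTranspose_smul, conjTranspose_one, sub_mulVec, smul_mulVec,
    one_mulVec, sub_eq_zero] at h

end StarOrdered

section Centering

variable {ι κ 𝕜 : Type*} [Fintype ι] [DecidableEq ι] [Field 𝕜]

noncomputable def centering (𝕜 ι : Type*) [Field 𝕜] [Fintype ι] [DecidableEq ι] : Matrix ι ι 𝕜 :=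
  1 - (Fintype.card ι : 𝕜)⁻¹ • of fun _ _ => 1

theorem mul_centering {M : Matrix κ ι 𝕜} (h : M *ᵥ 1 = 0) : M * centering 𝕜 ι = M := by
  rw [centering, Matrix.mul_sub, Matrix.mul_one, Matrix.mul_smul, mul_of_one_eq_zero h, smul_zero,
    sub_zero]

theorem centering_mul {M : Matrix ι κ 𝕜} (h : 1 ᵥ* M = 0) : centering 𝕜 ι * M = M := by
  rw [centering, Matrix.sub_mul, Matrix.one_mul, Matrix.smul_mul, of_one_mul_eq_zero h, smul_zero,
    sub_zero]

theorem centering_mulVec (x : ι → 𝕜) :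
    centering 𝕜 ι *ᵥ x = x - ((Fintype.card ι : 𝕜)⁻¹ * ∑ i, x i) • 1 := by
  rw [centering, sub_mulVec, one_mulVec, Matrix.smul_mulVec]
  ext i
  simp [mulVec, dotProduct]

theorem conjTranspose_centering [StarRing 𝕜] : (centering 𝕜 ι)ᴴ = centering 𝕜 ι := by
  ext i j
  by_cases h : i = j <;> simp [centering, one_apply, h, eq_comm]

theorem centering_map_ofReal : (centering ℝ ι).map (fun x => (x : ℂ)) = centering ℂ ι := by
  ext i j
  by_cases h : i = j <;> simp [centering, one_apply, h]

variable [CharZero 𝕜] [Nonempty ι]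

theorem centering_mulVec_one : centering 𝕜 ι *ᵥ 1 = 0 := by
  ext i
  simp [centering, mulVec, dotProduct, one_apply]

theorem one_vecMul_centering : 1 ᵥ* centering 𝕜 ι = 0 := by
  ext i
  simp [centering, vecMul, dotProduct, one_apply]

theorem centering_mul_self : centering 𝕜 ι * centering 𝕜 ι = centering 𝕜 ι :=
  centering_mul one_vecMul_centering

theorem trace_centering : (centering 𝕜 ι).trace = Fintype.card ι - 1 := by
  simp [centering, trace]

end Centering

section Restrictor

variable {m k : Type*} [Fintype m] [Fintype k] [DecidableEq m] [DecidableEq k]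
  {Q : Matrix m k ℂ}

open scoped ComplexOrder in
theorem IsRestrictor.mul_conjTranspose (hQ : IsRestrictor Q)
    (hcard : Fintype.card k + 1 = Fintype.card m) : Q * Qᴴ = centering ℂ m := by
  obtain ⟨hQQ, hQe⟩ := hQ
  have : Nonempty m := Fintype.card_pos_iff.mp (by omega)
  have hQP : Q * Qᴴ * centering ℂ m = Q * Qᴴ :=
    mul_centering (by rw [← mulVec_mulVec]; exact (congrArg _ hQe).trans (mulVec_zero Q))
  have hPQ : centering ℂ m * (Q * Qᴴ) = Q * Qᴴ := by
    simpa [conjTranspose_mul, conjTranspose_centering] using congrArg conjTranspose hQP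
  have hproj : Q * Qᴴ * (Q * Qᴴ) = Q * Qᴴ := by
    rw [Matrix.mul_assoc, ← Matrix.mul_assoc Qᴴ, hQQ, Matrix.one_mul]
  have hsq : (Q * Qᴴ - centering ℂ m)ᴴ * (Q * Qᴴ - centering ℂ m) =
      -(Q * Qᴴ - centering ℂ m) := by
    rw [conjTranspose_sub, conjTranspose_mul, conjTranspose_conjTranspose, conjTranspose_centering,
      Matrix.sub_mul, Matrix.mul_sub, Matrix.mul_sub, hproj, hQP, hPQ, centering_mul_self]
    abel
  have htrace : (Q * Qᴴ - centering ℂ m).trace = 0 := by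
    rw [trace_sub, trace_mul_comm, hQQ, trace_one, trace_centering, ← hcard]
    push_cast; ring
  rw [← sub_eq_zero, ← trace_conjTranspose_mul_self_eq_zero_iff, hsq, trace_neg, htrace, neg_zero]

theorem IsRestrictor.isStarNormal_iff (hQ : IsRestrictor Q)
    (hcard : Fintype.card k + 1 = Fintype.card m) (M : Matrix m m ℝ) :
    IsStarNormal (Qᴴ * M.map (fun x => (x : ℂ)) * Q) ↔
      IsStarNormal (centering ℝ m * M * centering ℝ m) := by
  have hmap : (centering ℝ m * M * centering ℝ m).map (fun x => (x : ℂ)) =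
      Q * Qᴴ * M.map (fun x => (x : ℂ)) * (Q * Qᴴ) := by
    rw [hQ.mul_conjTranspose hcard, ← centering_map_ofReal]
    exact (Matrix.map_mul (f := Complex.ofRealHom)).trans
      (congrArg (· * _) (Matrix.map_mul (f := Complex.ofRealHom)))
  rw [← isStarNormal_mul_mul_conjTranspose_iff hQ.1, ← isStarNormal_map_ofReal_iff, hmap]
  simp only [Matrix.mul_assoc]

end Restrictor

theorem lap_mulVec_one {m : Type*} [Fintype m] [DecidableEq m] (A : Matrix m m ℝ) :
    lap A *ᵥ 1 = 0 := by
  ext i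
  simp [lap, mulVec, dotProduct, diagonal_apply]

section DirectedJoin

variable {α β : Type*} [Fintype β] [DecidableEq α]

noncomputable def directedJoinLap (L₁ : Matrix α α ℝ) (L₂ : Matrix β β ℝ) :
    Matrix (α ⊕ β) (α ⊕ β) ℝ :=
  fromBlocks (L₁ + (Fintype.card β : ℝ) • 1) (-of fun _ _ => 1) 0 L₂

theorem directedJoinLap_eq_add (L₁ : Matrix α α ℝ) (L₂ : Matrix β β ℝ) :
    directedJoinLap L₁ L₂ = fromBlocks L₁ 0 0 L₂ + directedJoinLap 0 0 := by
  simp [directedJoinLap, fromBlocks_add]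

variable [Fintype α] {L₁ : Matrix α α ℝ} {L₂ : Matrix β β ℝ}

theorem directedJoinLap_mulVec_one (h₁ : L₁ *ᵥ 1 = 0) (h₂ : L₂ *ᵥ 1 = 0) :
    directedJoinLap L₁ L₂ *ᵥ 1 = 0 := by
  rw [directedJoinLap_eq_add, add_mulVec, fromBlocks_mulVec_one_eq_zero h₁ h₂, zero_add]
  ext (i | i) <;> simp [directedJoinLap, mulVec, dotProduct, one_apply]

theorem not_isStarNormal_directedJoinLap [Nonempty α] [Nonempty β] (h₁ : L₁ *ᵥ 1 = 0)
    (h₂ : L₂ *ᵥ 1 = 0) : ¬ IsStarNormal (directedJoinLap L₁ L₂) := by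
  intro hN
  have key : (1 ᵥ* directedJoinLap L₁ L₂) ⬝ᵥ Sum.elim 0 1 =
      -(Fintype.card α * Fintype.card β : ℝ) := by
    rw [← dotProduct_mulVec]
    simp [directedJoinLap, fromBlocks_mulVec, h₂]
    simp [mulVec, dotProduct]
  rw [hN.vecMul_eq_zero (directedJoinLap_mulVec_one h₁ h₂), zero_dotProduct] at key
  have : (0 : ℝ) < Fintype.card α * Fintype.card β := by positivity
  linarith

theorem commute_fromBlocks_directedJoinLap_zero (h₁ : L₁ *ᵥ 1 = 0) (h₂ : 1 ᵥ* L₂ = 0) :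
    Commute (fromBlocks L₁ 0 0 L₂) (directedJoinLap 0 0) := by
  rw [commute_iff_eq, directedJoinLap, fromBlocks_multiply, fromBlocks_multiply]
  simp only [Matrix.mul_neg, Matrix.neg_mul, mul_of_one_eq_zero h₁, of_one_mul_eq_zero h₂]
  simp

variable [DecidableEq β]

theorem isSelfAdjoint_centering_mul_directedJoinLap_zero_mul_centering [Nonempty α] :
    IsSelfAdjoint (centering ℝ (α ⊕ β) * directedJoinLap 0 0 * centering ℝ (α ⊕ β)) := by
  set P := centering ℝ (α ⊕ β)
  set N : Matrix (α ⊕ β) (α ⊕ β) ℝ := directedJoinLap 0 0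
  set u : α ⊕ β → ℝ := Sum.elim 1 0
  have hskew : N - Nᴴ = vecMulVec 1 u - vecMulVec u 1 := by
    ext (i | i) (j | j) <;> simp [N, u, directedJoinLap, vecMulVec, one_apply, eq_comm (a := j)]
  have hleft : P * vecMulVec 1 u = 0 := by rw [mul_vecMulVec, centering_mulVec_one]; simp
  have hright : vecMulVec u 1 * P = 0 := by rw [vecMulVec_mul, one_vecMul_centering]; simp
  have hsub : P * N * P - P * Nᴴ * P = 0 := by
    rw [← Matrix.sub_mul, ← Matrix.mul_sub, hskew, Matrix.mul_sub, Matrix.sub_mul, hleft,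
      Matrix.mul_assoc P, hright]
    simp
  have hP : Pᴴ = P := conjTranspose_centering
  rw [IsSelfAdjoint, star_eq_conjTranspose]
  simp only [conjTranspose_mul, hP, ← Matrix.mul_assoc]
  exact (sub_eq_zero.mp hsub).symm

theorem centering_mul_directedJoinLap_mul_centering (h₁ : L₁ *ᵥ 1 = 0) (h₁' : 1 ᵥ* L₁ = 0)
    (h₂ : L₂ *ᵥ 1 = 0) (h₂' : 1 ᵥ* L₂ = 0) :
    centering ℝ (α ⊕ β) * directedJoinLap L₁ L₂ * centering ℝ (α ⊕ β) =
      fromBlocks L₁ 0 0 L₂ + centering ℝ (α ⊕ β) * directedJoinLap 0 0 * centering ℝ (α ⊕ β) := by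
  rw [directedJoinLap_eq_add, Matrix.mul_add, Matrix.add_mul,
    centering_mul (one_vecMul_fromBlocks_eq_zero h₁' h₂'),
    mul_centering (fromBlocks_mulVec_one_eq_zero h₁ h₂)]

theorem isStarNormal_centering_mul_directedJoinLap_mul_centering_iff_of_balanced [Nonempty α]
    (h₁ : L₁ *ᵥ 1 = 0) (h₁' : 1 ᵥ* L₁ = 0) (h₂ : L₂ *ᵥ 1 = 0) (h₂' : 1 ᵥ* L₂ = 0) :
    IsStarNormal (centering ℝ (α ⊕ β) * directedJoinLap L₁ L₂ * centering ℝ (α ⊕ β)) ↔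
      IsStarNormal L₁ ∧ IsStarNormal L₂ := by
  have hDP : Commute (fromBlocks L₁ 0 0 L₂) (centering ℝ (α ⊕ β)) :=
    (mul_centering (fromBlocks_mulVec_one_eq_zero h₁ h₂)).trans
      (centering_mul (one_vecMul_fromBlocks_eq_zero h₁' h₂')).symm
  rw [centering_mul_directedJoinLap_mul_centering h₁ h₁' h₂ h₂',
    isStarNormal_add_iff_of_commute isSelfAdjoint_centering_mul_directedJoinLap_zero_mul_centering
      ((hDP.mul_right (commute_fromBlocks_directedJoinLap_zero h₁ h₂')).mul_right hDP),
    isStarNormal_fromBlocks_iff]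

theorem vecMul_fromBlocks_eq_zero_of_isStarNormal [Nonempty α] (h₁ : L₁ *ᵥ 1 = 0)
    (h₂ : L₂ *ᵥ 1 = 0)
    (hK : IsStarNormal (centering ℝ (α ⊕ β) * directedJoinLap L₁ L₂ * centering ℝ (α ⊕ β))) :
    (centering ℝ (α ⊕ β) *ᵥ Sum.elim 1 0) ᵥ* fromBlocks L₁ 0 0 L₂ = 0 := by
  set P := centering ℝ (α ⊕ β)
  set D := fromBlocks L₁ 0 0 L₂
  set N : Matrix (α ⊕ β) (α ⊕ β) ℝ := directedJoinLap 0 0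
  set u : α ⊕ β → ℝ := Sum.elim 1 0
  set w := P *ᵥ u with hw
  have hDP : D * P = D := mul_centering (fromBlocks_mulVec_one_eq_zero h₁ h₂)
  have hNP : N * P = N := mul_centering (directedJoinLap_mulVec_one (zero_mulVec 1) (zero_mulVec 1))
  have hK_eq : P * directedJoinLap L₁ L₂ * P = P * D + P * N * P := by
    rw [directedJoinLap_eq_add, Matrix.mul_add, Matrix.add_mul, Matrix.mul_assoc P D, hDP]
  have hPw : P *ᵥ w = w := by rw [hw, mulVec_mulVec, centering_mul_self]
  have hDw : D *ᵥ w = 0 := by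
    rw [hw, mulVec_mulVec, hDP]
    ext (i | i) <;> simp [D, u, fromBlocks_mulVec, h₁]
  have hSw : (P * N * P) *ᵥ w = (Fintype.card β : ℝ) • w := by
    have hNu : N *ᵥ u = (Fintype.card β : ℝ) • u := by
      ext (i | i) <;> simp [N, u, directedJoinLap, fromBlocks_mulVec, Matrix.smul_mulVec]
    rw [← mulVec_mulVec, hPw, ← mulVec_mulVec, hw, mulVec_mulVec _ N, hNP, hNu, mulVec_smul]
  have hKw : (P * directedJoinLap L₁ L₂ * P) *ᵥ w = (Fintype.card β : ℝ) • w := by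
    rw [hK_eq, add_mulVec, hSw, ← mulVec_mulVec, hDw, mulVec_zero, zero_add]
  have hKw' := hK.conjTranspose_mulVec_eq_smul hKw
  have hS : (P * N * P)ᴴ = P * N * P :=
    isSelfAdjoint_centering_mul_directedJoinLap_zero_mul_centering
  rwa [hK_eq, conjTranspose_add, hS, conjTranspose_mul, conjTranspose_centering, add_mulVec, hSw,
    ← mulVec_mulVec, hPw, star_trivial, add_eq_right, conjTranspose_eq_transpose_of_trivial,
    mulVec_transpose] at hKw'

theorem one_vecMul_eq_zero_of_vecMul_fromBlocks_eq_zero [Nonempty α] [Nonempty β]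
    (h : (centering ℝ (α ⊕ β) *ᵥ Sum.elim 1 0) ᵥ* fromBlocks L₁ 0 0 L₂ = 0) :
    1 ᵥ* L₁ = 0 ∧ 1 ᵥ* L₂ = 0 := by
  set t : ℝ := (Fintype.card (α ⊕ β) : ℝ)⁻¹ * Fintype.card α with ht_def
  have ht : 0 < t := by positivity
  have ht' : t < 1 := by
    rw [ht_def, Fintype.card_sum, Nat.cast_add, inv_mul_lt_one₀ (by positivity)]
    have : (0 : ℝ) < Fintype.card β := by positivity
    linarith
  have hw : centering ℝ (α ⊕ β) *ᵥ Sum.elim 1 0 = Sum.elim (1 : α → ℝ) 0 - t • 1 := by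
    simp [centering_mulVec, Fintype.sum_sum_type, t]
  rw [hw, sub_vecMul, smul_vecMul] at h
  constructor
  · ext i
    have hi := congrFun h (Sum.inl i)
    simp [vecMul_fromBlocks] at hi
    have hi' : (1 - t) * (1 ᵥ* L₁) i = 0 := by rw [sub_mul, one_mul]; exact hi
    simpa using (mul_eq_zero.mp hi').resolve_left (by linarith)
  · ext i
    have hi := congrFun h (Sum.inr i)
    simp [vecMul_fromBlocks] at hi
    simpa using hi.resolve_left ht.ne'

theorem isStarNormal_centering_mul_directedJoinLap_mul_centering_iff [Nonempty α] [Nonempty β]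
    (h₁ : L₁ *ᵥ 1 = 0) (h₂ : L₂ *ᵥ 1 = 0) :
    IsStarNormal (centering ℝ (α ⊕ β) * directedJoinLap L₁ L₂ * centering ℝ (α ⊕ β)) ↔
      IsStarNormal L₁ ∧ IsStarNormal L₂ := by
  constructor
  · intro hK
    obtain ⟨h₁', h₂'⟩ := one_vecMul_eq_zero_of_vecMul_fromBlocks_eq_zero
      (vecMul_fromBlocks_eq_zero_of_isStarNormal h₁ h₂ hK)
    exact (isStarNormal_centering_mul_directedJoinLap_mul_centering_iff_of_balanced
      h₁ h₁' h₂ h₂').mp hK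
  · rintro ⟨hL₁, hL₂⟩
    exact (isStarNormal_centering_mul_directedJoinLap_mul_centering_iff_of_balanced
      h₁ (hL₁.vecMul_eq_zero h₁) h₂ (hL₂.vecMul_eq_zero h₂)).mpr ⟨hL₁, hL₂⟩

end DirectedJoin

theorem directed_join_restricted_normal_iff_general {n₁ n₂ : ℕ} (h₁ : 1 ≤ n₁) (h₂ : 1 ≤ n₂)
    (A₁ : Matrix (Fin n₁) (Fin n₁) ℝ) (A₂ : Matrix (Fin n₂) (Fin n₂) ℝ)
    (L : Matrix (Fin n₁ ⊕ Fin n₂) (Fin n₁ ⊕ Fin n₂) ℝ)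
    (hL : L = Matrix.fromBlocks
        (lap A₁ + (n₂ : ℝ) • (1 : Matrix (Fin n₁) (Fin n₁) ℝ))
        (-(Matrix.of fun _ _ => (1 : ℝ))) 0 (lap A₂))
    (Q : Matrix (Fin n₁ ⊕ Fin n₂) (Fin (n₁ + n₂ - 1)) ℂ) (hQ : IsRestrictor Q) :
    (IsNormalM (Qᴴ * L.map (fun x => (x : ℂ)) * Q) ∧ ¬ IsNormalM L) ↔
      (IsNormalM (lap A₁) ∧ IsNormalM (lap A₂)) := by
  have : NeZero n₁ := ⟨by omega⟩
  have : NeZero n₂ := ⟨by omega⟩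
  have hJoin : L = directedJoinLap (lap A₁) (lap A₂) := by
    rw [hL, directedJoinLap, Fintype.card_fin]
  have hcard : Fintype.card (Fin (n₁ + n₂ - 1)) + 1 = Fintype.card (Fin n₁ ⊕ Fin n₂) := by
    simp only [Fintype.card_fin, Fintype.card_sum]; omega
  simp only [Matrix.isNormalM_iff_isStarNormal, hQ.isStarNormal_iff hcard, hJoin,
    isStarNormal_centering_mul_directedJoinLap_mul_centering_iff (lap_mulVec_one A₁)
      (lap_mulVec_one A₂)]
  exact and_iff_left (not_isStarNormal_directedJoinLap (lap_mulVec_one A₁) (lap_mulVec_one A₂))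

/-- The directed join `Γ₁ →∨ Γ₂` is restricted-normal (i.e. `QᴴLQ` is
normal and `L` is not normal) iff `L₁` and `L₂` are both normal matrices. -/
theorem directed_join_restricted_normal_iff {n₁ n₂ : ℕ} (h₁ : 1 ≤ n₁) (h₂ : 1 ≤ n₂)
    (A₁ : Matrix (Fin n₁) (Fin n₁) ℝ) (A₂ : Matrix (Fin n₂) (Fin n₂) ℝ)
    (hA₁ : IsAdj A₁) (hA₂ : IsAdj A₂)
    (L : Matrix (Fin n₁ ⊕ Fin n₂) (Fin n₁ ⊕ Fin n₂) ℝ)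
    (hL : L = Matrix.fromBlocks
        (lap A₁ + (n₂ : ℝ) • (1 : Matrix (Fin n₁) (Fin n₁) ℝ))
        (-(Matrix.of fun _ _ => (1 : ℝ))) 0 (lap A₂))
    (Q : Matrix (Fin n₁ ⊕ Fin n₂) (Fin (n₁ + n₂ - 1)) ℂ) (hQ : IsRestrictor Q) :
    (IsNormalM (Qᴴ * L.map (fun x => (x : ℂ)) * Q) ∧ ¬ IsNormalM L) ↔
      (IsNormalM (lap A₁) ∧ IsNormalM (lap A₂)) :=
  directed_join_restricted_normal_iff_general h₁ h₂ A₁ A₂ L hL Q hQ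
end

section
/- Let Γ be a digraph of order n with vertex set V and adjacency matrix A, and suppose Γ is not balanced. Then Γ is a directed join of two balanced digraphs — i.e., there exists a set S ⊆ V with S ≠ ∅ and S ≠ V such that A i j = 1 and A j i = 0 for all i ∈ S and j ∉ S, and the induced subdigraphs on S and on V∖S are each balanced — if and only if n divides ι(i) − ι(j) (as integers) for all vertices i, j ∈ V. -/
open Matrix

/-- Imbalance of a vertex: `ι(i) = d⁺(i) - d⁻(i)`. -/
noncomputable def imb {m : Type*} [Fintype m] (A : Matrix m m ℝ) (i : m) : ℝ :=
  (∑ j, A i j) - ∑ j, A j i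

/-!
The imbalances sum to zero and, for a 0/1 matrix with zero diagonal, lie strictly between `-n`
and `n`. If they are pairwise congruent modulo `n`, they therefore take exactly two values: `a` on
the set `S` of vertices of positive imbalance and `a - n` off it, and summing gives
`a = |Sᶜ|`. The total imbalance of `S` is the number of arcs from `S` to `Sᶜ` minus the number
back, which is at most `|S| |Sᶜ|`; equality forces every arc `S → Sᶜ` and none back. Conversely,
in a directed join the imbalance of a vertex is its imbalance inside its own part, shifted by
`|Sᶜ|` on `S` and by `-|S|` on `Sᶜ`.
-/

open Finset

variable {m : Type*} [Fintype m]

lemma eq_mul_of_eq_int_mul_of_mem_Ioo {c x : ℝ} {z k : ℤ} (hx : x = c * z)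
    (h₁ : (k - 1) * c < x) (h₂ : x < (k + 1) * c) : x = c * k := by
  have hc : 0 < c := by linarith
  have hz₁ : ((k - 1 : ℤ) : ℝ) < z := by
    push_cast
    exact lt_of_mul_lt_mul_right (by linarith) hc.le
  have hz₂ : (z : ℝ) < ((k + 1 : ℤ) : ℝ) := by
    push_cast
    exact lt_of_mul_lt_mul_right (by linarith) hc.le
  obtain rfl : z = k := by
    norm_cast at hz₁ hz₂
    omega
  exact hx

lemma eq_card_compl_and_eq_neg_card {f : m → ℝ} (hsum : ∑ i, f i = 0)
    (hlt : ∀ i, |f i| < Fintype.card m)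
    (hmod : ∀ i j, ∃ z : ℤ, f i - f j = Fintype.card m * z)
    {S : Finset m} [DecidableEq m] (hS : ∀ i, i ∈ S ↔ 0 < f i) {i₀ : m} (hi₀ : i₀ ∈ S) :
    (∀ i ∈ S, f i = #Sᶜ) ∧ ∀ i ∉ S, f i = -#S := by
  set n : ℝ := (Fintype.card m : ℝ) with hn_def
  have hbound : ∀ i, -n < f i ∧ f i < n := fun i => abs_lt.mp (hlt i)
  have hn : 0 < n := (abs_nonneg _).trans_lt (hlt i₀)
  have hpos₀ := (hS i₀).mp hi₀
  have hon : ∀ i ∈ S, f i = f i₀ := by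
    intro i hi
    obtain ⟨z, hz⟩ := hmod i i₀
    have hpos := (hS i).mp hi
    have hdiff := eq_mul_of_eq_int_mul_of_mem_Ioo (k := 0) hz
      (by push_cast; linarith [hbound i₀, hbound i]) (by push_cast; linarith [hbound i₀, hbound i])
    push_cast at hdiff
    linarith
  have hoff : ∀ i ∉ S, f i = f i₀ - n := by
    intro i hi
    obtain ⟨z, hz⟩ := hmod i₀ i
    have hnonpos := not_lt.mp ((hS i).not.mp hi)
    have hdiff := eq_mul_of_eq_int_mul_of_mem_Ioo (k := 1) hz
      (by push_cast; linarith) (by push_cast; linarith [hbound i₀, hbound i])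
    push_cast at hdiff
    linarith
  have hcard : (#S : ℝ) + #Sᶜ = n := by rw [hn_def]; exact_mod_cast card_add_card_compl S
  have hval : f i₀ = #Sᶜ := by
    rw [← sum_add_sum_compl S, sum_congr rfl hon,
      sum_congr rfl fun i hi => hoff i (mem_compl.mp hi), sum_const, sum_const,
      nsmul_eq_mul, nsmul_eq_mul] at hsum
    have : n * (f i₀ - #Sᶜ) = 0 := by linear_combination hsum - f i₀ * hcard
    linarith [(mul_eq_zero.mp this).resolve_left hn.ne']
  exact ⟨fun i hi => (hon i hi).trans hval, fun i hi => by rw [hoff i hi, hval]; linarith⟩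

lemma IsAdj.nonneg {A : Matrix m m ℝ} (hA : IsAdj A) (i j : m) : 0 ≤ A i j := by
  rcases hA.1 i j with h | h <;> simp [h]

lemma IsAdj.le_one {A : Matrix m m ℝ} (hA : IsAdj A) (i j : m) : A i j ≤ 1 := by
  rcases hA.1 i j with h | h <;> simp [h]

lemma sum_le_card_sub_one_of_eq_zero {g : m → ℝ} {i : m} (hi : g i = 0) (hg : ∀ j, g j ≤ 1) :
    ∑ j, g j ≤ Fintype.card m - 1 := by
  classical
  calc ∑ j, g j = ∑ j ∈ univ.erase i, g j := (sum_erase _ hi).symm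
    _ ≤ #(univ.erase i) • (1 : ℝ) := sum_le_card_nsmul _ _ _ fun j _ => hg j
    _ = Fintype.card m - 1 := by rw [nsmul_one, cast_card_erase_of_mem (mem_univ i), card_univ]

lemma IsAdj.abs_imb_lt_card {A : Matrix m m ℝ} (hA : IsAdj A) (i : m) :
    |imb A i| < Fintype.card m := by
  have hout := sum_le_card_sub_one_of_eq_zero (hA.2 i) (hA.le_one i)
  have hin := sum_le_card_sub_one_of_eq_zero (g := fun j => A j i) (hA.2 i) (hA.le_one · i)
  have hout₀ : 0 ≤ ∑ j, A i j := sum_nonneg fun j _ => hA.nonneg i j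
  have hin₀ : 0 ≤ ∑ j, A j i := sum_nonneg fun j _ => hA.nonneg j i
  rw [imb, abs_sub_lt_iff]
  constructor <;> linarith

lemma sum_imb_eq_zero (A : Matrix m m ℝ) : ∑ i, imb A i = 0 := by
  simp only [imb, sum_sub_distrib]
  rw [sum_comm]
  exact sub_self _

lemma exists_imb_pos_of_not_bal {A : Matrix m m ℝ} (h : ¬ Bal A) : ∃ i, 0 < imb A i := by
  by_contra! hle
  refine h fun i => sub_eq_zero.mp ?_
  exact (sum_eq_zero_iff_of_nonpos fun i _ => hle i).mp (sum_imb_eq_zero A) i (mem_univ i)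

def BalOn (A : Matrix m m ℝ) (S : Finset m) : Prop :=
  ∀ i ∈ S, ∑ j ∈ S, A i j = ∑ j ∈ S, A j i

def IsDirectedJoin (A : Matrix m m ℝ) (S : Finset m) : Prop :=
  ∀ i ∈ S, ∀ j ∉ S, A i j = 1 ∧ A j i = 0

section DecidableEq

variable [DecidableEq m]

lemma imb_eq_add_compl (A : Matrix m m ℝ) (S : Finset m) (i : m) :
    imb A i = (∑ j ∈ S, A i j - ∑ j ∈ S, A j i) + (∑ j ∈ Sᶜ, A i j - ∑ j ∈ Sᶜ, A j i) := by
  rw [imb, ← sum_add_sum_compl S, ← sum_add_sum_compl S fun j => A j i]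
  ring

lemma sum_imb_eq_sum_compl (A : Matrix m m ℝ) (S : Finset m) :
    ∑ i ∈ S, imb A i = ∑ i ∈ S, ∑ j ∈ Sᶜ, (A i j - A j i) := by
  have hinner : ∑ i ∈ S, ∑ j ∈ S, A j i = ∑ i ∈ S, ∑ j ∈ S, A i j := sum_comm
  simp only [imb_eq_add_compl A S, sum_add_distrib, sum_sub_distrib, hinner]
  ring

lemma isDirectedJoin_of_sum_imb_eq {A : Matrix m m ℝ} (hA : IsAdj A) {S : Finset m}
    (h : ∑ i ∈ S, imb A i = #S * #Sᶜ) : IsDirectedJoin A S := by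
  have hterm : ∀ i j, A i j - A j i ≤ 1 := fun i j => by linarith [hA.le_one i j, hA.nonneg j i]
  have hdefect : ∑ p ∈ S ×ˢ Sᶜ, (1 - (A p.1 p.2 - A p.2 p.1)) = 0 := by
    rw [sum_sub_distrib, sum_product' (f := fun i j => A i j - A j i),
      ← sum_imb_eq_sum_compl, h, sum_const, card_product, nsmul_one]
    push_cast
    ring
  intro i hi j hj
  have := (sum_eq_zero_iff_of_nonneg fun p _ => sub_nonneg.mpr (hterm p.1 p.2)).mp hdefect (i, j)
    (mem_product.mpr ⟨hi, mem_compl.mpr hj⟩)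
  constructor <;> linarith [hA.le_one i j, hA.nonneg j i]

namespace IsDirectedJoin

variable {A : Matrix m m ℝ} {S : Finset m}

lemma imb_of_mem (hS : IsDirectedJoin A S) {i : m} (hi : i ∈ S) :
    imb A i = (∑ j ∈ S, A i j - ∑ j ∈ S, A j i) + #Sᶜ := by
  have hout : ∑ j ∈ Sᶜ, A i j = #Sᶜ := by
    rw [sum_congr rfl fun j hj => (hS i hi j (mem_compl.mp hj)).1]
    simp
  have hin : ∑ j ∈ Sᶜ, A j i = 0 := sum_eq_zero fun j hj => (hS i hi j (mem_compl.mp hj)).2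
  rw [imb_eq_add_compl A S, hout, hin, sub_zero]

lemma imb_of_not_mem (hS : IsDirectedJoin A S) {i : m} (hi : i ∉ S) :
    imb A i = (∑ j ∈ Sᶜ, A i j - ∑ j ∈ Sᶜ, A j i) - #S := by
  have hout : ∑ j ∈ S, A i j = 0 := sum_eq_zero fun j hj => (hS j hj i hi).2
  have hin : ∑ j ∈ S, A j i = #S := by
    rw [sum_congr rfl fun j hj => (hS j hj i hi).1]
    simp
  rw [imb_eq_add_compl A S, hout, hin]
  ring

lemma exists_imb_sub_imb_eq_card_mul (hS : IsDirectedJoin A S) (hbal : BalOn A S)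
    (hbalc : BalOn A Sᶜ) (i j : m) : ∃ z : ℤ, imb A i - imb A j = Fintype.card m * z := by
  have hvalue : ∀ i, ∃ z : ℤ, imb A i = #Sᶜ + Fintype.card m * z := by
    intro i
    by_cases hi : i ∈ S
    · exact ⟨0, by rw [hS.imb_of_mem hi, hbal i hi]; simp⟩
    · refine ⟨-1, ?_⟩
      rw [hS.imb_of_not_mem hi, hbalc i (mem_compl.mpr hi), ← card_add_card_compl S]
      push_cast
      ring
  obtain ⟨zi, hzi⟩ := hvalue i
  obtain ⟨zj, hzj⟩ := hvalue j
  exact ⟨zi - zj, by rw [hzi, hzj]; push_cast; ring⟩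

end IsDirectedJoin

theorem exists_isDirectedJoin_of_imb_sub_imb_eq_card_mul {A : Matrix m m ℝ} (hA : IsAdj A)
    (hnb : ¬ Bal A) (hmod : ∀ i j, ∃ z : ℤ, imb A i - imb A j = Fintype.card m * z) :
    ∃ S : Finset m, S.Nonempty ∧ S ≠ univ ∧ IsDirectedJoin A S ∧ BalOn A S ∧ BalOn A Sᶜ := by
  classical
  obtain ⟨i₀, hi₀⟩ := exists_imb_pos_of_not_bal hnb
  set S : Finset m := {i | 0 < imb A i}
  have hS : ∀ i, i ∈ S ↔ 0 < imb A i := by simp [S]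
  obtain ⟨hon, hoff⟩ := eq_card_compl_and_eq_neg_card (sum_imb_eq_zero A) hA.abs_imb_lt_card hmod
    hS ((hS i₀).mpr hi₀)
  have hjoin : IsDirectedJoin A S := isDirectedJoin_of_sum_imb_eq hA <| by
    rw [sum_congr rfl hon, sum_const, nsmul_eq_mul]
  refine ⟨S, ⟨i₀, (hS i₀).mpr hi₀⟩, fun hSuniv => ?_, hjoin, fun i hi => ?_, fun i hi => ?_⟩
  · have := hon i₀ ((hS i₀).mpr hi₀)
    rw [hSuniv, compl_univ, card_empty, Nat.cast_zero] at this
    linarith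
  · have := hjoin.imb_of_mem hi
    rw [hon i hi] at this
    linarith
  · have := hjoin.imb_of_not_mem (mem_compl.mp hi)
    rw [hoff i (mem_compl.mp hi)] at this
    linarith

end DecidableEq

/-- A non-balanced digraph is a directed join of two balanced digraphs
iff `n ∣ ι(i) - ι(j)` (as integers) for all vertices `i, j`. -/
theorem directed_join_of_balanced_iff_imbalance {n : ℕ}
    (A : Matrix (Fin n) (Fin n) ℝ) (hA : IsAdj A) (hnb : ¬ Bal A) :
    (∃ S : Finset (Fin n), S.Nonempty ∧ S ≠ Finset.univ ∧
        (∀ i ∈ S, ∀ j ∉ S, A i j = 1 ∧ A j i = 0) ∧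
        (∀ i ∈ S, ∑ j ∈ S, A i j = ∑ j ∈ S, A j i) ∧
        (∀ i ∈ Sᶜ, ∑ j ∈ Sᶜ, A i j = ∑ j ∈ Sᶜ, A j i)) ↔
      (∀ i j, ∃ z : ℤ, imb A i - imb A j = (n : ℝ) * z) := by
  constructor
  · rintro ⟨S, -, -, hjoin, hbal, hbalc⟩ i j
    simpa only [Fintype.card_fin] using
      IsDirectedJoin.exists_imb_sub_imb_eq_card_mul hjoin hbal hbalc i j
  · intro hmod
    exact exists_isDirectedJoin_of_imb_sub_imb_eq_card_mul hA hnb (by simpa only [Fintype.card_fin])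
end
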